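/- arXiv:1708.02014 — 5 statements merged into one kernel-verified Lean document; each statement's English description precedes it below -/
import Mathlib

section
/- With τ the Geck–Lambropoulou Markov trace with parameters z, y, one has τ(h_{1,2}) = (u^2+1)(uz)^2 + (u^2+2)uz + 1 and τ(h_B) = u^2 v^2 y^2 + (uv + u^3 v^3) z y + (v + u^2 v) y + (u + u^3 v^2) z + 1. -/
/-- The subalgebra `H_n(u,v)` of the (direct limit of the) Hecke algebras of type B:
it is generated by `b₁` and the braiding generators `h 1, …, h (n-1)`. -/
def heckeBSub (K : Type*) {H : Type*} [CommSemiring K] [Semiring H] [Algebra K H]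
    (b₁ : H) (h : ℕ → H) (n : ℕ) : Subalgebra K H :=
  Algebra.adjoin K ({b₁} ∪ h '' {i | 1 ≤ i ∧ i ≤ n - 1})

/-- With `τ` the Geck–Lambropoulou Markov trace with parameters `z, y` on the
tower of Hecke algebras of type B, one has
`τ(h_{1,2}) = (u²+1)(uz)² + (u²+2)uz + 1` and
`τ(h_B) = u²v²y² + (uv + u³v³)zy + (v + u²v)y + (u + u³v²)z + 1`. -/
theorem stmt2
    {K : Type*} [Field K] {H : Type*} [Ring H] [Algebra K H]
    (u v z y : K)
    (b₁ : H) (h b : ℕ → H)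
    (rel_comm : ∀ i j : ℕ, 1 ≤ i → i + 1 < j → h i * h j = h j * h i)
    (rel_braid : ∀ i : ℕ, 1 ≤ i → h i * h (i + 1) * h i = h (i + 1) * h i * h (i + 1))
    (rel_bcomm : ∀ i : ℕ, 2 ≤ i → b₁ * h i = h i * b₁)
    (rel_bhbh : h 1 * b₁ * h 1 * b₁ = b₁ * h 1 * b₁ * h 1)
    (rel_hsq : ∀ i : ℕ, 1 ≤ i → h i * h i = 1 + (u - u⁻¹) • h i)
    (rel_bsq : b₁ * b₁ = 1 + (v - v⁻¹) • b₁)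
    (hb1 : b 1 = b₁)
    (hbrec : ∀ k : ℕ, 1 ≤ k → b (k + 1) * h k = h k * b k)
    (τ : H →ₗ[K] K)
    (tr_one : τ 1 = 1)
    (tr_conj : ∀ a c : H, τ (a * c) = τ (c * a))
    (tr_markov_h : ∀ m : ℕ, 1 ≤ m → ∀ a ∈ heckeBSub K b₁ h m, τ (a * h m) = z * τ a)
    (tr_markov_b : ∀ m : ℕ, 1 ≤ m → ∀ a ∈ heckeBSub K b₁ h m, τ (a * b (m + 1)) = y * τ a) :
    τ (1 + u • (h 1 + h 2) + u ^ 2 • (h 1 * h 2 + h 2 * h 1) + u ^ 3 • (h 1 * h 2 * h 1))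
        = (u ^ 2 + 1) * (u * z) ^ 2 + (u ^ 2 + 2) * (u * z) + 1
    ∧ τ (1 + u • h 1 + v • b₁ + (u * v) • (h 1 * b₁ + b₁ * h 1) + (u ^ 2 * v) • (h 1 * b₁ * h 1)
          + (u * v ^ 2) • (b₁ * h 1 * b₁) + (u * v) ^ 2 • (h 1 * b₁ * h 1 * b₁))
        = u ^ 2 * v ^ 2 * y ^ 2 + (u * v + u ^ 3 * v ^ 3) * (z * y) + (v + u ^ 2 * v) * y
          + (u + u ^ 3 * v ^ 2) * z + 1 := by
  -- membership facts
  have memb : ∀ m : ℕ, b₁ ∈ heckeBSub K b₁ h m := fun m =>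
    Algebra.subset_adjoin (Set.mem_union_left _ rfl)
  have memh1 : h 1 ∈ heckeBSub K b₁ h 2 :=
    Algebra.subset_adjoin (Set.mem_union_right _ ⟨1, ⟨le_rfl, by norm_num⟩, rfl⟩)
  have hsq1 : h 1 * h 1 = 1 + (u - u⁻¹) • h 1 := rel_hsq 1 le_rfl
  -- basic trace values
  have t1 : τ (h 1) = z := by
    have := tr_markov_h 1 le_rfl 1 (one_mem _)
    rwa [one_mul, tr_one, mul_one] at this
  have t2 : τ (h 2) = z := by
    have := tr_markov_h 2 (by norm_num) 1 (one_mem _)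
    rwa [one_mul, tr_one, mul_one] at this
  have t12 : τ (h 1 * h 2) = z * z := by
    have := tr_markov_h 2 (by norm_num) (h 1) memh1
    rwa [t1] at this
  have t21 : τ (h 2 * h 1) = z * z := by rw [tr_conj, t12]
  have t121 : τ (h 1 * h 2 * h 1) = z + (u - u⁻¹) * (z * z) := by
    rw [tr_conj, ← mul_assoc, hsq1, add_mul, one_mul, smul_mul_assoc, map_add, map_smul,
      smul_eq_mul, t2, t12]
  have tb2 : τ (b 2) = y := by
    have := tr_markov_b 1 le_rfl 1 (one_mem _)
    rwa [one_mul, tr_one, mul_one] at this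
  have key : b 2 * h 1 = h 1 * b₁ := by
    have := hbrec 1 le_rfl; rwa [hb1] at this
  -- τ(b₁) = y
  have l1 : τ (b 2 * (h 1 * h 1)) = τ (b 2) + (u - u⁻¹) * τ (h 1 * b₁) := by
    rw [hsq1, mul_add, mul_one, mul_smul_comm, key, map_add, map_smul, smul_eq_mul]
  have l2 : τ (b 2 * (h 1 * h 1)) = τ b₁ + (u - u⁻¹) * τ (h 1 * b₁) := by
    have e : b 2 * (h 1 * h 1) = h 1 * b₁ * h 1 := by rw [← mul_assoc, key]
    rw [e, tr_conj, ← mul_assoc, hsq1, add_mul, one_mul, smul_mul_assoc, map_add, map_smul,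
      smul_eq_mul]
  have tb1 : τ b₁ = y := by
    have := add_right_cancel (l1.symm.trans l2)
    rw [← this, tb2]
  have tbh : τ (b₁ * h 1) = z * y := by
    rw [tr_markov_h 1 le_rfl b₁ (memb 1), tb1]
  have thb : τ (h 1 * b₁) = z * y := by rw [tr_conj, tbh]
  have thbh : τ (h 1 * b₁ * h 1) = y + (u - u⁻¹) * (z * y) := by
    rw [tr_conj, ← mul_assoc, hsq1, add_mul, one_mul, smul_mul_assoc, map_add, map_smul,
      smul_eq_mul, tb1, thb]
  have tbhb : τ (b₁ * h 1 * b₁) = z + (v - v⁻¹) * (z * y) := by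
    rw [tr_conj, ← mul_assoc, rel_bsq, add_mul, one_mul, smul_mul_assoc, map_add, map_smul,
      smul_eq_mul, t1, tbh]
  have thbb : τ (h 1 * (b₁ * b₁)) = z + (v - v⁻¹) * (z * y) := by
    rw [rel_bsq, mul_add, mul_one, mul_smul_comm, map_add, map_smul, smul_eq_mul, t1, thb]
  have tb2b1 : τ (b 2 * b₁) = y * y := by
    rw [tr_conj, tr_markov_b 1 le_rfl b₁ (memb 1), tb1]
  have thbhb : τ (h 1 * b₁ * h 1 * b₁)
      = y * y + (u - u⁻¹) * (z + (v - v⁻¹) * (z * y)) := by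
    have e : h 1 * b₁ * h 1 * b₁ = b 2 * b₁ + (u - u⁻¹) • (h 1 * (b₁ * b₁)) := by
      rw [← key, mul_assoc (b 2), hsq1, mul_add, mul_one, add_mul, mul_smul_comm,
        smul_mul_assoc, key, mul_assoc]
    rw [e, map_add, map_smul, smul_eq_mul, tb2b1, thbb]
  constructor
  · simp only [map_add, map_smul, smul_eq_mul, tr_one, t1, t2, t12, t21, t121]
    rcases eq_or_ne u 0 with hu | hu
    · subst hu; ring_nf
    · field_simp
      ring
  · simp only [map_add, map_smul, smul_eq_mul, tr_one, t1, tb1, thb, tbh, thbh, tbhb, thbhb]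
    rcases eq_or_ne u 0 with hu | hu
    · subst hu; ring_nf
    · rcases eq_or_ne v 0 with hv | hv
      · subst hv; field_simp; ring
      · field_simp
        ring
end

section
/- For n ≥ 3 and every 1 ≤ i ≤ n, the Geck–Lambropoulou Markov trace satisfies τ(b_i h_{1,2}) = y · τ(h_{1,2}). -/
/-- For `n ≥ 3` and every `1 ≤ i ≤ n` (here: every `i ≥ 1` in the tower),
the Geck–Lambropoulou Markov trace satisfies `τ(b_i h_{1,2}) = y · τ(h_{1,2})`. -/
theorem stmt4
    {K : Type*} [Field K] {H : Type*} [Ring H] [Algebra K H]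
    (u v z y : K)
    (b₁ : H) (h b : ℕ → H)
    (rel_comm : ∀ i j : ℕ, 1 ≤ i → i + 1 < j → h i * h j = h j * h i)
    (rel_braid : ∀ i : ℕ, 1 ≤ i → h i * h (i + 1) * h i = h (i + 1) * h i * h (i + 1))
    (rel_bcomm : ∀ i : ℕ, 2 ≤ i → b₁ * h i = h i * b₁)
    (rel_bhbh : h 1 * b₁ * h 1 * b₁ = b₁ * h 1 * b₁ * h 1)
    (rel_hsq : ∀ i : ℕ, 1 ≤ i → h i * h i = 1 + (u - u⁻¹) • h i)
    (rel_bsq : b₁ * b₁ = 1 + (v - v⁻¹) • b₁)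
    (hb1 : b 1 = b₁)
    (hbrec : ∀ k : ℕ, 1 ≤ k → b (k + 1) * h k = h k * b k)
    (τ : H →ₗ[K] K)
    (tr_one : τ 1 = 1)
    (tr_conj : ∀ a c : H, τ (a * c) = τ (c * a))
    (tr_markov_h : ∀ m : ℕ, 1 ≤ m → ∀ a ∈ heckeBSub K b₁ h m, τ (a * h m) = z * τ a)
    (tr_markov_b : ∀ m : ℕ, 1 ≤ m → ∀ a ∈ heckeBSub K b₁ h m, τ (a * b (m + 1)) = y * τ a) :
    ∀ i : ℕ, 1 ≤ i →
      τ (b i * (1 + u • (h 1 + h 2) + u ^ 2 • (h 1 * h 2 + h 2 * h 1)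
          + u ^ 3 • (h 1 * h 2 * h 1)))
        = y * τ (1 + u • (h 1 + h 2) + u ^ 2 • (h 1 * h 2 + h 2 * h 1)
          + u ^ 3 • (h 1 * h 2 * h 1)) := by
  intro i hi
  set X : H := 1 + u • (h 1 + h 2) + u ^ 2 • (h 1 * h 2 + h 2 * h 1)
      + u ^ 3 • (h 1 * h 2 * h 1) with hX
  -- abbreviations
  have m1_2 : h 1 ∈ heckeBSub K b₁ h 2 :=
    Algebra.subset_adjoin (Set.mem_union_right _ ⟨1, ⟨le_rfl, by norm_num⟩, rfl⟩)
  have mb : ∀ m : ℕ, b₁ ∈ heckeBSub K b₁ h m := fun m =>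
    Algebra.subset_adjoin (Set.mem_union_left _ rfl)
  -- inverses of h 1, h 2
  have hinvL1 : (h 1 - (u - u⁻¹) • 1) * h 1 = 1 := by
    rw [sub_mul, smul_mul_assoc, one_mul, rel_hsq 1 le_rfl]; abel
  have hinvR1 : h 1 * (h 1 - (u - u⁻¹) • 1) = 1 := by
    rw [mul_sub, mul_smul_comm, mul_one, rel_hsq 1 le_rfl]; abel
  have hinvR2 : h 2 * (h 2 - (u - u⁻¹) • 1) = 1 := by
    rw [mul_sub, mul_smul_comm, mul_one, rel_hsq 2 one_le_two]; abel
  -- expressions for b 2 and b 3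
  have hb21 : b 2 * h 1 = h 1 * b₁ := by
    have := hbrec 1 le_rfl; rw [hb1] at this; exact this
  have hb32 : b 3 * h 2 = h 2 * b 2 := hbrec 2 one_le_two
  have b2eq : b 2 = h 1 * b₁ * (h 1 - (u - u⁻¹) • 1) := by
    calc b 2 = b 2 * (h 1 * (h 1 - (u - u⁻¹) • 1)) := by rw [hinvR1, mul_one]
    _ = (b 2 * h 1) * (h 1 - (u - u⁻¹) • 1) := by rw [mul_assoc]
    _ = h 1 * b₁ * (h 1 - (u - u⁻¹) • 1) := by rw [hb21]
  have b3eq : b 3 = h 2 * b 2 * (h 2 - (u - u⁻¹) • 1) := by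
    calc b 3 = b 3 * (h 2 * (h 2 - (u - u⁻¹) • 1)) := by rw [hinvR2, mul_one]
    _ = (b 3 * h 2) * (h 2 - (u - u⁻¹) • 1) := by rw [mul_assoc]
    _ = h 2 * b 2 * (h 2 - (u - u⁻¹) • 1) := by rw [hb32]
  have mb2 : b 2 ∈ heckeBSub K b₁ h 2 := by
    rw [b2eq]
    exact mul_mem (mul_mem m1_2 (mb 2))
      (sub_mem m1_2 (Subalgebra.smul_mem _ (one_mem _) _))
  -- basic trace values
  have th1 : τ (h 1) = z := by
    simpa [tr_one] using tr_markov_h 1 le_rfl 1 (one_mem _)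
  have th2 : τ (h 2) = z := by
    simpa [tr_one] using tr_markov_h 2 one_le_two 1 (one_mem _)
  have th12 : τ (h 1 * h 2) = z * z := by
    rw [tr_markov_h 2 one_le_two (h 1) m1_2, th1]
  have th21 : τ (h 2 * h 1) = z * z := by rw [tr_conj, th12]
  have th121 : τ (h 1 * h 2 * h 1) = z + (u - u⁻¹) * (z * z) := by
    rw [tr_conj (h 1 * h 2) (h 1), ← mul_assoc, rel_hsq 1 le_rfl, add_mul, one_mul,
      smul_mul_assoc, map_add, map_smul, smul_eq_mul, th2, th12]
  have tb2 : τ (b 2) = y := by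
    simpa [tr_one] using tr_markov_b 1 le_rfl 1 (one_mem _)
  have tb1 : τ b₁ = y := by
    have : τ (b 2) = τ b₁ := by
      rw [b2eq, tr_conj (h 1 * b₁) (h 1 - (u - u⁻¹) • 1), ← mul_assoc, hinvL1, one_mul]
    rw [← this, tb2]
  have tb1h1 : τ (b₁ * h 1) = z * y := by
    rw [tr_markov_h 1 le_rfl b₁ (mb 1), tb1]
  have th1b1 : τ (h 1 * b₁) = z * y := by rw [tr_conj, tb1h1]
  have tb1h2 : τ (b₁ * h 2) = z * y := by
    rw [tr_markov_h 2 one_le_two b₁ (mb 2), tb1]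
  have tb1h12 : τ (b₁ * h 1 * h 2) = z * (z * y) := by
    rw [tr_markov_h 2 one_le_two (b₁ * h 1) (mul_mem (mb 2) m1_2), tb1h1]
  have tb1h21 : τ (b₁ * h 2 * h 1) = z * (z * y) := by
    rw [tr_conj (b₁ * h 2) (h 1), ← mul_assoc,
      tr_markov_h 2 one_le_two (h 1 * b₁) (mul_mem m1_2 (mb 2)), th1b1]
  have tb1h121 : τ (b₁ * h 1 * h 2 * h 1) = z * (y + (u - u⁻¹) * (z * y)) := by
    rw [tr_conj (b₁ * h 1 * h 2) (h 1), ← mul_assoc, ← mul_assoc,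
      tr_markov_h 2 one_le_two (h 1 * b₁ * h 1) (mul_mem (mul_mem m1_2 (mb 2)) m1_2)]
    congr 1
    rw [tr_conj (h 1 * b₁) (h 1), ← mul_assoc, rel_hsq 1 le_rfl, add_mul, one_mul,
      smul_mul_assoc, map_add, map_smul, smul_eq_mul, tb1, th1b1]
  -- trace values with b 2
  have tb2h1 : τ (b 2 * h 1) = z * y := by rw [hb21, th1b1]
  have th1b2 : τ (h 1 * b 2) = z * y := by rw [tr_conj, tb2h1]
  have tb2h2 : τ (b 2 * h 2) = z * y := by
    rw [tr_markov_h 2 one_le_two (b 2) mb2, tb2]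
  have tb2h12 : τ (b 2 * h 1 * h 2) = z * (z * y) := by
    rw [hb21, tr_markov_h 2 one_le_two (h 1 * b₁) (mul_mem m1_2 (mb 2)), th1b1]
  have tb2h21 : τ (b 2 * h 2 * h 1) = z * (z * y) := by
    rw [tr_conj (b 2 * h 2) (h 1), ← mul_assoc,
      tr_markov_h 2 one_le_two (h 1 * b 2) (mul_mem m1_2 mb2), th1b2]
  have tb2h121 : τ (b 2 * h 1 * h 2 * h 1) = z * (y + (u - u⁻¹) * (z * y)) := by
    rw [tr_conj (b 2 * h 1 * h 2) (h 1), ← mul_assoc, ← mul_assoc,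
      tr_markov_h 2 one_le_two (h 1 * b 2 * h 1) (mul_mem (mul_mem m1_2 mb2) m1_2)]
    congr 1
    rw [tr_conj (h 1 * b 2) (h 1), ← mul_assoc, rel_hsq 1 le_rfl, add_mul, one_mul,
      smul_mul_assoc, map_add, map_smul, smul_eq_mul, tb2, th1b2]
  have tb3 : τ (b 3) = y := by
    simpa [tr_one] using tr_markov_b 2 one_le_two 1 (one_mem _)
  -- the two base cases by full expansion
  have E1 : τ (b₁ * X) = y * τ X := by
    rw [hX]
    simp only [mul_add, mul_one, mul_smul_comm, ← mul_assoc, map_add, map_smul,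
      smul_eq_mul, tr_one, th1, th2, th12, th21, th121, tb1, tb1h1, tb1h2, tb1h12,
      tb1h21, tb1h121]
    ring
  have E2 : τ (b 2 * X) = y * τ X := by
    rw [hX]
    simp only [mul_add, mul_one, mul_smul_comm, ← mul_assoc, map_add, map_smul,
      smul_eq_mul, tr_one, th1, th2, th12, th21, th121, tb2, tb2h1, tb2h2, tb2h12,
      tb2h21, tb2h121]
    ring
  -- case split on i
  have hcase : i = 1 ∨ i = 2 ∨ i = 3 ∨ ∃ m : ℕ, 3 ≤ m ∧ i = m + 1 := by
    rcases Nat.lt_or_ge i 4 with h4 | h4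
    · interval_cases i <;> simp
    · exact Or.inr (Or.inr (Or.inr ⟨i - 1, by omega, by omega⟩))
  rcases hcase with rfl | rfl | rfl | ⟨m, hm3, rfl⟩
  · rw [hb1]; exact E1
  · exact E2
  · -- i = 3
    rcases eq_or_ne u 0 with hu | hu
    · have hX1 : X = 1 := by rw [hX]; simp [hu]
      rw [hX1, mul_one, tr_one, mul_one]; exact tb3
    · -- eigenvector relations
      have L2 : h 2 * X = u • X := by
        have e2 : h 2 * (h 1 * h 2) = h 1 * h 2 * h 1 := by
          rw [← mul_assoc]; exact (rel_braid 1 le_rfl).symm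
        have e3 : h 2 * (h 2 * h 1) = h 1 + (u - u⁻¹) • (h 2 * h 1) := by
          rw [← mul_assoc, rel_hsq 2 one_le_two, add_mul, one_mul, smul_mul_assoc]
        have e4 : h 2 * (h 1 * h 2 * h 1) = h 1 * h 2 + (u - u⁻¹) • (h 1 * h 2 * h 1) := by
          calc h 2 * (h 1 * h 2 * h 1) = (h 2 * (h 1 * h 2)) * h 1 := by
                simp only [mul_assoc]
          _ = (h 1 * h 2 * h 1) * h 1 := by rw [e2]
          _ = (h 1 * h 2) * (h 1 * h 1) := by simp only [mul_assoc]
          _ = h 1 * h 2 + (u - u⁻¹) • (h 1 * h 2 * h 1) := by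
                rw [rel_hsq 1 le_rfl, mul_add, mul_one, mul_smul_comm]
        rw [hX]
        simp only [mul_add, mul_one, mul_smul_comm, e2, e3, e4, rel_hsq 2 one_le_two,
          smul_add, smul_smul]
        match_scalars <;> field_simp <;> ring
      have R2 : X * h 2 = u • X := by
        have f2 : h 1 * h 2 * h 2 = h 1 + (u - u⁻¹) • (h 1 * h 2) := by
          rw [mul_assoc, rel_hsq 2 one_le_two, mul_add, mul_one, mul_smul_comm]
        have f3 : h 2 * h 1 * h 2 = h 1 * h 2 * h 1 := (rel_braid 1 le_rfl).symm
        have f4 : h 1 * h 2 * h 1 * h 2 = h 2 * h 1 + (u - u⁻¹) • (h 1 * h 2 * h 1) := by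
          calc h 1 * h 2 * h 1 * h 2 = h 1 * (h 2 * h 1 * h 2) := by
                simp only [mul_assoc]
          _ = h 1 * (h 1 * h 2 * h 1) := by rw [f3]
          _ = (h 1 * h 1) * (h 2 * h 1) := by simp only [mul_assoc]
          _ = h 2 * h 1 + (u - u⁻¹) • (h 1 * h 2 * h 1) := by
                rw [rel_hsq 1 le_rfl, add_mul, one_mul, smul_mul_assoc, ← mul_assoc]
        rw [hX]
        simp only [add_mul, one_mul, smul_mul_assoc, f2, f3, f4, rel_hsq 2 one_le_two,
          smul_add, smul_smul]
        match_scalars <;> field_simp <;> ring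
      have hsub : (h 2 - (u - u⁻¹) • 1) * X = u⁻¹ • X := by
        rw [sub_mul, smul_mul_assoc, one_mul, L2, ← sub_smul]
        congr 1; ring
      have step : b 3 * X = u⁻¹ • (h 2 * b 2 * X) := by
        calc b 3 * X = (h 2 * b 2) * ((h 2 - (u - u⁻¹) • 1) * X) := by
              rw [b3eq, mul_assoc]
        _ = u⁻¹ • (h 2 * b 2 * X) := by rw [hsub, mul_smul_comm]
      rw [step, map_smul, smul_eq_mul]
      have hmid : τ (h 2 * b 2 * X) = u * τ (b 2 * X) := by
        rw [mul_assoc, tr_conj (h 2) (b 2 * X), mul_assoc, R2, mul_smul_comm,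
          map_smul, smul_eq_mul]
      rw [hmid, ← mul_assoc, inv_mul_cancel₀ hu, one_mul, E2]
  · -- i = m + 1 with m ≥ 3
    have mh1 : h 1 ∈ heckeBSub K b₁ h m :=
      Algebra.subset_adjoin (Set.mem_union_right _ ⟨1, ⟨le_rfl, by omega⟩, rfl⟩)
    have mh2 : h 2 ∈ heckeBSub K b₁ h m :=
      Algebra.subset_adjoin (Set.mem_union_right _ ⟨2, ⟨one_le_two, by omega⟩, rfl⟩)
    have memX : X ∈ heckeBSub K b₁ h m := by
      rw [hX]
      exact add_mem (add_mem (add_mem (one_mem _)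
        (Subalgebra.smul_mem _ (add_mem mh1 mh2) _))
        (Subalgebra.smul_mem _ (add_mem (mul_mem mh1 mh2) (mul_mem mh2 mh1)) _))
        (Subalgebra.smul_mem _ (mul_mem (mul_mem mh1 mh2) mh1) _)
    rw [tr_conj]
    exact tr_markov_b m (by omega) X memX
end

section
/- The Markov trace Tr on Y_{d,n}^B(u,v) satisfies Tr(r_B) = (1/d^2) Σ_{r,s=0}^{d−1} x_r x_s + u^2 v^2 (1/d^2) Σ_{r,s=0}^{d−1} y_r y_s + v(u^2+1)(1/d^2) Σ_{r,s=0}^{d−1} x_s y_r + z u (1 + u^2 v^2)(1/d) Σ_{r=0}^{d−1} x_r + z (u^3 v^3 + u v)(1/d) Σ_{r=0}^{d−1} y_r. -/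
/-- The subalgebra `Y_{d,n}^B(u,v)` of the (direct limit of the) framizations of the Hecke
algebras of type B: it is generated by `b₁`, the framing generators `t 1, …, t n` and the
braiding generators `g 1, …, g (n-1)`. -/
def frameBSub (K : Type*) {H : Type*} [CommSemiring K] [Semiring H] [Algebra K H]
    (b₁ : H) (t g : ℕ → H) (n : ℕ) : Subalgebra K H :=
  Algebra.adjoin K ({b₁} ∪ t '' {i | 1 ≤ i ∧ i ≤ n} ∪ g '' {i | 1 ≤ i ∧ i ≤ n - 1})

/-- The Markov trace `Tr` on `Y_{d,n}^B(u,v)` satisfies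
`Tr(r_B) = (1/d²)Σ x_r x_s + u²v²(1/d²)Σ y_r y_s + v(u²+1)(1/d²)Σ x_s y_r
  + zu(1+u²v²)(1/d)Σ x_r + z(u³v³+uv)(1/d)Σ y_r`. -/
theorem stmt11
    {K : Type*} [Field K] [CharZero K] {H : Type*} [Ring H] [Algebra K H]
    (u v z : K) (d : ℕ) [NeZero d]
    (x y : ZMod d → K) (hx0 : x 0 = 1)
    (b₁ : H) (t g b : ℕ → H) (e : ℕ → H) (f₁ : H)
    (he : ∀ i : ℕ, 1 ≤ i → e i = (d : K)⁻¹ • ∑ s : ZMod d, t i ^ s.val * t (i + 1) ^ (-s).val)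
    (hf : f₁ = (d : K)⁻¹ • ∑ s : ZMod d, t 1 ^ s.val)
    (rel_comm : ∀ i j : ℕ, 1 ≤ i → i + 1 < j → g i * g j = g j * g i)
    (rel_braid : ∀ i : ℕ, 1 ≤ i → g i * g (i + 1) * g i = g (i + 1) * g i * g (i + 1))
    (rel_bg : ∀ i : ℕ, 2 ≤ i → b₁ * g i = g i * b₁)
    (rel_bgbg : b₁ * g 1 * b₁ * g 1 = g 1 * b₁ * g 1 * b₁)
    (rel_tt : ∀ i j : ℕ, t i * t j = t j * t i)
    (rel_tg : ∀ i j : ℕ, 1 ≤ i → t j * g i = g i * t (Equiv.swap i (i + 1) j))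
    (rel_tb : ∀ i : ℕ, t i * b₁ = b₁ * t i)
    (rel_td : ∀ i : ℕ, t i ^ d = 1)
    (rel_gsq : ∀ i : ℕ, 1 ≤ i → g i * g i = 1 + (u - u⁻¹) • (e i * g i))
    (rel_bsq : b₁ * b₁ = 1 + (v - v⁻¹) • (f₁ * b₁))
    (hb1 : b 1 = b₁)
    (hbrec : ∀ k : ℕ, 1 ≤ k → b (k + 1) * g k = g k * b k)
    (Tr : H →ₗ[K] K)
    (tr_one : Tr 1 = 1)
    (tr_g : ∀ m : ℕ, 1 ≤ m → ∀ X ∈ frameBSub K b₁ t g m, Tr (X * g m) = z * Tr X)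
    (tr_bt : ∀ m : ℕ, 1 ≤ m → ∀ k : ZMod d, ∀ X ∈ frameBSub K b₁ t g m,
      Tr (X * (b (m + 1) * t (m + 1) ^ k.val)) = y k * Tr X)
    (tr_t : ∀ m : ℕ, 1 ≤ m → ∀ k : ZMod d, ∀ X ∈ frameBSub K b₁ t g m,
      Tr (X * t (m + 1) ^ k.val) = x k * Tr X)
    (tr_comm : ∀ X Y : H, Tr (X * Y) = Tr (Y * X))
    :
    Tr (f₁ * e 1 * (1 + u • g 1 + v • b₁ + (u * v) • (g 1 * b₁ + b₁ * g 1)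
        + (u ^ 2 * v) • (g 1 * b₁ * g 1) + (u * v ^ 2) • (b₁ * g 1 * b₁)
        + (u * v) ^ 2 • (g 1 * b₁ * g 1 * b₁)))
      = ((d : K) ^ 2)⁻¹ * ∑ r : ZMod d, ∑ s : ZMod d, x r * x s
        + u ^ 2 * v ^ 2 * (((d : K) ^ 2)⁻¹ * ∑ r : ZMod d, ∑ s : ZMod d, y r * y s)
        + v * (u ^ 2 + 1) * (((d : K) ^ 2)⁻¹ * ∑ r : ZMod d, ∑ s : ZMod d, x s * y r)
        + z * u * (1 + u ^ 2 * v ^ 2) * ((d : K)⁻¹ * ∑ r : ZMod d, x r)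
        + z * (u ^ 3 * v ^ 3 + u * v) * ((d : K)⁻¹ * ∑ r : ZMod d, y r) := by
  classical
  have hdK : (d : K) ≠ 0 := Nat.cast_ne_zero.mpr (NeZero.ne d)
  -- specialize relations
  have he1 : e 1 = (d : K)⁻¹ • ∑ s : ZMod d, t 1 ^ s.val * t 2 ^ (-s).val := by
    simpa using he 1 le_rfl
  have hb2g : b 2 * g 1 = g 1 * b₁ := by
    have := hbrec 1 le_rfl
    rw [hb1] at this
    simpa using this
  set c : K := (d : K)⁻¹ with hc
  set A : H := ∑ s : ZMod d, t 1 ^ s.val with hA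
  set B : H := ∑ s : ZMod d, t 2 ^ s.val with hB
  set E : H := ∑ s : ZMod d, t 1 ^ s.val * t 2 ^ (-s).val with hE
  set f₂ : H := c • B with hf₂
  -- commutation of t-powers
  have cT : ∀ i j a b2 : ℕ, Commute (t i ^ a) (t j ^ b2) :=
    fun i j a b2 => (show Commute (t i) (t j) from rel_tt i j).pow_pow a b2
  have cTb : ∀ i a : ℕ, Commute b₁ (t i ^ a) :=
    fun i a => ((show Commute (t i) b₁ from rel_tb i).pow_left a).symm
  -- power arithmetic
  have tpow_mod : ∀ (i n : ℕ), t i ^ (n % d) = t i ^ n := by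
    intro i n
    conv_rhs => rw [← Nat.div_add_mod n d]
    rw [pow_add, pow_mul, rel_td, one_pow, one_mul]
  have tval_add : ∀ (i : ℕ) (a b2 : ZMod d),
      t i ^ (a + b2).val = t i ^ a.val * t i ^ b2.val := by
    intro i a b2
    rw [ZMod.val_add, tpow_mod, pow_add]
  -- moving g past t-powers
  have tg12 : t 1 * g 1 = g 1 * t 2 := by
    have := rel_tg 1 1 le_rfl
    rwa [Equiv.swap_apply_left] at this
  have tg21 : t 2 * g 1 = g 1 * t 1 := by
    have := rel_tg 1 2 le_rfl
    rwa [show (2:ℕ) = 1 + 1 from rfl, Equiv.swap_apply_right] at this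
  have ptg1 : ∀ a : ℕ, t 1 ^ a * g 1 = g 1 * t 2 ^ a := by
    intro a; induction a with
    | zero => simp
    | succ n ih => rw [pow_succ, pow_succ, mul_assoc, tg12, ← mul_assoc, ih, mul_assoc]
  have ptg2 : ∀ a : ℕ, t 2 ^ a * g 1 = g 1 * t 1 ^ a := by
    intro a; induction a with
    | zero => simp
    | succ n ih => rw [pow_succ, pow_succ, mul_assoc, tg21, ← mul_assoc, ih, mul_assoc]
  -- reindexing sums
  have sum_shift : ∀ (s₀ : ZMod d) (F : ZMod d → H),
      (∑ k : ZMod d, F (k + s₀)) = ∑ k : ZMod d, F k :=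
    fun s₀ F => Fintype.sum_equiv (Equiv.addRight s₀) _ _ (fun _ => rfl)
  have sum_neg : ∀ F : ZMod d → H, (∑ k : ZMod d, F (-k)) = ∑ k : ZMod d, F k :=
    fun F => Fintype.sum_equiv (Equiv.neg _) _ _ (fun _ => rfl)
  -- basic sum identities
  have hAA : A * A = (d : ℕ) • A := by
    rw [hA, Finset.sum_mul_sum]
    have h1 : ∀ k : ZMod d, (∑ s : ZMod d, t 1 ^ k.val * t 1 ^ s.val)
        = ∑ s : ZMod d, t 1 ^ s.val := by
      intro k
      have h2 : ∀ s : ZMod d, t 1 ^ k.val * t 1 ^ s.val = t 1 ^ ((s + k).val) := by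
        intro s
        rw [tval_add, (cT 1 1 k.val s.val).eq]
      rw [Finset.sum_congr rfl fun s _ => h2 s, sum_shift k (fun m => t 1 ^ m.val)]
    rw [Finset.sum_congr rfl fun k _ => h1 k, Finset.sum_const, Finset.card_univ, ZMod.card]
  have hcc : (c * c) * (d : K) = c := by
    rw [hc]; field_simp
  have hff : f₁ * f₁ = f₁ := by
    rw [hf, smul_mul_smul_comm, hAA, ← Nat.cast_smul_eq_nsmul K, smul_smul, hcc]
  have hAE : A * E = A * B := by
    rw [hA, hE, Finset.sum_mul_sum, Finset.sum_comm]
    have h1 : ∀ s : ZMod d, (∑ k : ZMod d, t 1 ^ k.val * (t 1 ^ s.val * t 2 ^ (-s).val))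
        = A * t 2 ^ (-s).val := by
      intro s
      have h2 : ∀ k : ZMod d, t 1 ^ k.val * (t 1 ^ s.val * t 2 ^ (-s).val)
          = t 1 ^ ((k + s).val) * t 2 ^ (-s).val := by
        intro k
        rw [← mul_assoc, ← pow_add, ← tpow_mod 1 (k.val + s.val), ← ZMod.val_add]
      rw [Finset.sum_congr rfl fun k _ => h2 k, ← Finset.sum_mul,
        sum_shift s (fun m => t 1 ^ m.val), ← hA]
    rw [Finset.sum_congr rfl fun s _ => h1 s, ← Finset.mul_sum,
      sum_neg (fun m => t 2 ^ m.val), ← hB]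
  have hBE : B * E = A * B := by
    rw [hB, hE, Finset.sum_mul_sum, Finset.sum_comm]
    have h1 : ∀ s : ZMod d, (∑ k : ZMod d, t 2 ^ k.val * (t 1 ^ s.val * t 2 ^ (-s).val))
        = t 1 ^ s.val * B := by
      intro s
      have h2 : ∀ k : ZMod d, t 2 ^ k.val * (t 1 ^ s.val * t 2 ^ (-s).val)
          = t 1 ^ s.val * t 2 ^ ((k + (-s)).val) := by
        intro k
        rw [← mul_assoc, (cT 2 1 k.val s.val).eq, mul_assoc, ← pow_add,
          ← tpow_mod 2 (k.val + (-s).val), ← ZMod.val_add]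
      rw [Finset.sum_congr rfl fun k _ => h2 k, ← Finset.mul_sum,
        sum_shift (-s) (fun m => t 2 ^ m.val), ← hB]
    rw [Finset.sum_congr rfl fun s _ => h1 s, ← Finset.sum_mul, ← hA]
  have hAB : A * B = B * A :=
    (Commute.sum_right _ _ _ fun s _ => Commute.sum_left _ _ _ fun k _ => cT 1 2 _ _).eq
  have hAg : A * g 1 = g 1 * B := by
    rw [hA, hB, Finset.sum_mul, Finset.mul_sum]
    exact Finset.sum_congr rfl fun s _ => ptg1 s.val
  have hBg : B * g 1 = g 1 * A := by
    rw [hA, hB, Finset.sum_mul, Finset.mul_sum]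
    exact Finset.sum_congr rfl fun s _ => ptg2 s.val
  have hEg : E * g 1 = g 1 * E := by
    rw [hE, Finset.sum_mul, Finset.mul_sum]
    have h1 : ∀ s : ZMod d, t 1 ^ s.val * t 2 ^ (-s).val * g 1
        = g 1 * (t 2 ^ s.val * t 1 ^ (-s).val) := by
      intro s
      rw [mul_assoc, ptg2, ← mul_assoc, ptg1, mul_assoc]
    rw [Finset.sum_congr rfl fun s _ => h1 s]
    have h2 : (∑ s : ZMod d, g 1 * (t 2 ^ s.val * t 1 ^ (-s).val))
        = ∑ s : ZMod d, g 1 * (t 1 ^ s.val * t 2 ^ (-s).val) := by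
      rw [show (∑ s : ZMod d, g 1 * (t 2 ^ s.val * t 1 ^ (-s).val))
          = ∑ s : ZMod d, g 1 * (t 2 ^ (-s).val * t 1 ^ (-(-s)).val) from
          (sum_neg (fun m => g 1 * (t 2 ^ m.val * t 1 ^ (-m).val))).symm]
      exact Finset.sum_congr rfl fun s _ => by rw [neg_neg, (cT 2 1 _ _).eq]
    rw [h2]
  have hbA : b₁ * A = A * b₁ :=
    (Commute.sum_right _ _ _ fun s _ => cTb 1 s.val).eq
  have hbB : b₁ * B = B * b₁ :=
    (Commute.sum_right _ _ _ fun s _ => cTb 2 s.val).eq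
  have hbE : b₁ * E = E * b₁ :=
    (Commute.sum_right _ _ _ fun s _ => ((cTb 1 _).mul_right (cTb 2 _))).eq
  have hAEc : A * E = E * A :=
    (Commute.sum_right _ _ _ fun s _ => Commute.sum_left _ _ _ fun k _ =>
      ((cT 1 1 _ _).mul_right (cT 1 2 _ _))).eq
  -- f-element identities
  have hf₂g : f₂ * g 1 = g 1 * f₁ := by
    rw [hf₂, hf, smul_mul_assoc, hBg, mul_smul_comm]
  have hf₁g : f₁ * g 1 = g 1 * f₂ := by
    rw [hf₂, hf, smul_mul_assoc, hAg, mul_smul_comm]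
  have hfe : f₁ * e 1 = f₁ * f₂ := by
    rw [hf, he1, hf₂, smul_mul_smul_comm, smul_mul_smul_comm, hAE]
  have hf₂e : f₂ * e 1 = f₁ * f₂ := by
    rw [hf, he1, hf₂, smul_mul_smul_comm, smul_mul_smul_comm, hBE]
  have hbf₁ : b₁ * f₁ = f₁ * b₁ := by
    rw [hf, mul_smul_comm, smul_mul_assoc, hbA]
  have hbf₂ : b₁ * f₂ = f₂ * b₁ := by
    rw [hf₂, mul_smul_comm, smul_mul_assoc, hbB]
  have hbe : b₁ * e 1 = e 1 * b₁ := by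
    rw [he1, mul_smul_comm, smul_mul_assoc, hbE]
  have hfec : e 1 * f₁ = f₁ * e 1 := by
    rw [he1, hf, mul_smul_comm, smul_mul_assoc, mul_smul_comm, smul_mul_assoc, hAEc]
  have hgsq : g 1 * g 1 = 1 + (u - u⁻¹) • (e 1 * g 1) := rel_gsq 1 le_rfl
  have heg : e 1 * g 1 = g 1 * e 1 := by
    rw [he1, smul_mul_assoc, hEg, mul_smul_comm]
  -- the inverse of g 1
  set hInv : H := g 1 - (u - u⁻¹) • e 1 with hhInv
  have g_hInv : g 1 * hInv = 1 := by
    rw [hhInv, mul_sub, hgsq, mul_smul_comm, ← heg]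
    abel
  have hInv_g : hInv * g 1 = 1 := by
    rw [hhInv, sub_mul, hgsq, smul_mul_assoc]
    abel
  have key : ∀ X Y : H, (g 1 * X * hInv) * (g 1 * Y * hInv) = g 1 * (X * Y) * hInv := by
    intro X Y
    simp only [mul_assoc]
    rw [← mul_assoc hInv (g 1), hInv_g, one_mul]
  have t2pow : ∀ a : ℕ, t 2 ^ a = g 1 * t 1 ^ a * hInv := by
    intro a
    have h1 : t 2 ^ a = t 2 ^ a * (g 1 * hInv) := by rw [g_hInv, mul_one]
    rw [h1, ← mul_assoc, ptg2, mul_assoc]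
  have hb2 : b 2 = g 1 * b₁ * hInv := by
    have h1 : b 2 = b 2 * (g 1 * hInv) := by rw [g_hInv, mul_one]
    rw [h1, ← mul_assoc, hb2g, mul_assoc]
  have hb2t : ∀ a : ℕ, t 2 ^ a * b 2 = b 2 * t 2 ^ a := by
    intro a
    rw [hb2, t2pow a, key, key, (cTb 1 a).eq]
  have hb2f₂ : f₂ * b 2 = b 2 * f₂ := by
    rw [hf₂, hB, Finset.smul_sum, Finset.sum_mul, Finset.mul_sum]
    exact Finset.sum_congr rfl fun s _ => by
      rw [smul_mul_assoc, hb2t s.val, mul_smul_comm]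
  have trConj : ∀ X : H, Tr (hInv * X * g 1) = Tr X := by
    intro X
    rw [tr_comm (hInv * X) (g 1), ← mul_assoc, g_hInv, one_mul]
  -- memberships in the level-1 subalgebra
  have ht1S : t 1 ∈ frameBSub K b₁ t g 1 :=
    Algebra.subset_adjoin (Or.inl (Or.inr ⟨1, ⟨le_rfl, le_rfl⟩, rfl⟩))
  have hb₁S : b₁ ∈ frameBSub K b₁ t g 1 :=
    Algebra.subset_adjoin (Or.inl (Or.inl rfl))
  have hAS : A ∈ frameBSub K b₁ t g 1 := by
    rw [hA]; exact Subalgebra.sum_mem _ fun k _ => pow_mem ht1S _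
  have hf₁S : f₁ ∈ frameBSub K b₁ t g 1 := by
    rw [hf]; exact Subalgebra.smul_mem _ hAS _
  -- trace rules at level 1
  have trg : ∀ X ∈ frameBSub K b₁ t g 1, Tr (X * g 1) = z * Tr X := tr_g 1 le_rfl
  have trtW : ∀ (k : ZMod d), ∀ X ∈ frameBSub K b₁ t g 1,
      Tr (X * t 2 ^ k.val) = x k * Tr X := by
    intro k X hX
    have := tr_t 1 le_rfl k X hX
    simpa using this
  have trbtW : ∀ (k : ZMod d), ∀ X ∈ frameBSub K b₁ t g 1,
      Tr (X * (b 2 * t 2 ^ k.val)) = y k * Tr X := by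
    intro k X hX
    have := tr_bt 1 le_rfl k X hX
    simpa using this
  -- basic trace values
  have trt2 : ∀ k : ZMod d, Tr (t 2 ^ k.val) = x k := by
    intro k
    have h1 := trtW k 1 (one_mem _)
    rwa [one_mul, tr_one, mul_one] at h1
  have trbt2 : ∀ k : ZMod d, Tr (b 2 * t 2 ^ k.val) = y k := by
    intro k
    have h1 := trbtW k 1 (one_mem _)
    rwa [one_mul, tr_one, mul_one] at h1
  have trt1 : ∀ k : ZMod d, Tr (t 1 ^ k.val) = x k := by
    intro k
    have h1 : t 1 ^ k.val = hInv * t 2 ^ k.val * g 1 := by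
      rw [t2pow]
      simp only [mul_assoc]
      rw [← mul_assoc hInv (g 1), hInv_g, one_mul, mul_one]
    rw [h1, trConj, trt2]
  have trbt1 : ∀ k : ZMod d, Tr (b₁ * t 1 ^ k.val) = y k := by
    intro k
    have h1 : b₁ * t 1 ^ k.val = hInv * (b 2 * t 2 ^ k.val) * g 1 := by
      rw [hb2, t2pow, key]
      simp only [mul_assoc]
      rw [← mul_assoc hInv (g 1), hInv_g, one_mul, mul_one]
    rw [h1, trConj, trbt2]
  have trA : Tr A = ∑ r : ZMod d, x r := by
    rw [hA, map_sum]
    exact Finset.sum_congr rfl fun k _ => trt1 k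
  have trf₁ : Tr f₁ = c * ∑ r : ZMod d, x r := by
    rw [hf, map_smul, trA, smul_eq_mul]
  have trAb : Tr (A * b₁) = ∑ r : ZMod d, y r := by
    rw [hA, Finset.sum_mul, map_sum]
    exact Finset.sum_congr rfl fun k _ => by rw [(cTb 1 k.val).symm.eq, trbt1]
  have trf₁b : Tr (f₁ * b₁) = c * ∑ r : ZMod d, y r := by
    rw [hf, smul_mul_assoc, map_smul, trAb, smul_eq_mul]
  set xb : K := c * ∑ r : ZMod d, x r with hxb
  set yb : K := c * ∑ r : ZMod d, y r with hyb
  -- right-associated movers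
  have m1 : ∀ X : H, f₂ * (g 1 * X) = g 1 * (f₁ * X) := fun X => by
    rw [← mul_assoc, hf₂g, mul_assoc]
  have m2 : ∀ X : H, g 1 * (f₁ * X) = f₂ * (g 1 * X) := fun X => (m1 X).symm
  have m3 : ∀ X : H, b₁ * (f₁ * X) = f₁ * (b₁ * X) := fun X => by
    rw [← mul_assoc, hbf₁, mul_assoc]
  have m5 : ∀ X : H, f₂ * (f₁ * X) = f₁ * (f₂ * X) := fun X => by
    rw [← mul_assoc, show f₂ * f₁ = f₁ * f₂ from by
      rw [hf₂, hf, smul_mul_smul_comm, smul_mul_smul_comm, hAB], mul_assoc]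
  have m6 : ∀ X : H, f₁ * (f₁ * X) = f₁ * X := fun X => by
    rw [← mul_assoc, hff]
  have m7 : ∀ X : H, f₂ * (b₁ * X) = b₁ * (f₂ * X) := fun X => by
    rw [← mul_assoc, ← hbf₂, mul_assoc]
  have me : ∀ X : H, b₁ * (e 1 * X) = e 1 * (b₁ * X) := fun X => by
    rw [← mul_assoc, hbe, mul_assoc]
  have mef : ∀ X : H, e 1 * (f₁ * X) = f₁ * (e 1 * X) := fun X => by
    rw [← mul_assoc, hfec, mul_assoc]
  -- trace helpers
  have trMulF₂ : ∀ X ∈ frameBSub K b₁ t g 1, Tr (X * f₂) = xb * Tr X := by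
    intro X hX
    rw [hf₂, hB, mul_smul_comm, Finset.mul_sum, map_smul, map_sum,
      Finset.sum_congr rfl fun s _ => trtW s X hX, ← Finset.sum_mul, smul_eq_mul, hxb]
    ring
  have trMulBF₂ : ∀ X ∈ frameBSub K b₁ t g 1, Tr (X * (b 2 * f₂)) = yb * Tr X := by
    intro X hX
    rw [hf₂, hB, mul_smul_comm, mul_smul_comm, Finset.mul_sum, Finset.mul_sum,
      map_smul, map_sum,
      Finset.sum_congr rfl fun s _ => trbtW s X hX,
      ← Finset.sum_mul, smul_eq_mul, hyb]
    ring
  -- the seven trace values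
  have W1 : Tr (f₁ * f₂) = xb * xb := by
    rw [trMulF₂ f₁ hf₁S, trf₁, hxb]
  have W2 : Tr (f₁ * f₂ * g 1) = z * xb := by
    rw [mul_assoc, hf₂g, ← mul_assoc, tr_comm, ← mul_assoc, hff, trg f₁ hf₁S, trf₁, hxb]
  have W3 : Tr (f₁ * f₂ * b₁) = xb * yb := by
    rw [mul_assoc, ← hbf₂, ← mul_assoc, trMulF₂ (f₁ * b₁) (mul_mem hf₁S hb₁S), trf₁b, hyb]
  have Wfbg : Tr (f₁ * b₁ * g 1) = z * yb := by
    rw [trg _ (mul_mem hf₁S hb₁S), trf₁b, hyb]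
  have W4a : Tr (f₁ * f₂ * (b₁ * g 1)) = z * yb := by
    have h : f₁ * f₂ * (b₁ * g 1) = f₁ * b₁ * g 1 * f₁ := by
      simp only [mul_assoc]
      rw [m7 (g 1), hf₂g]
    rw [h, tr_comm, ← mul_assoc, ← mul_assoc, hff, Wfbg]
  have W4b : Tr (f₁ * f₂ * (g 1 * b₁)) = z * yb := by
    have h : b₁ * (f₁ * f₂ * g 1) = f₁ * f₂ * (b₁ * g 1) := by
      simp only [mul_assoc]
      rw [m3, m7]
    rw [← mul_assoc, tr_comm, h, W4a]
  have hbase : g 1 * f₁ * g 1 = f₂ + (u - u⁻¹) • (f₁ * f₂ * g 1) := by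
    rw [← hf₂g, mul_assoc, hgsq, mul_add, mul_one, mul_smul_comm, ← mul_assoc, hf₂e]
  have hgfg : ∀ X : H, g 1 * (f₁ * (g 1 * X))
      = f₂ * X + (u - u⁻¹) • (f₁ * (f₂ * (g 1 * X))) := by
    intro X
    calc g 1 * (f₁ * (g 1 * X)) = g 1 * f₁ * g 1 * X := by simp only [mul_assoc]
      _ = f₂ * X + (u - u⁻¹) • (f₁ * (f₂ * (g 1 * X))) := by
          rw [hbase, add_mul, smul_mul_assoc (u - u⁻¹) (f₁ * f₂ * g 1) X]
          simp only [mul_assoc]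
  have trfbf : f₁ * b₁ * f₁ = f₁ * b₁ := by
    rw [mul_assoc, hbf₁, ← mul_assoc, hff]
  have W5 : Tr (f₁ * f₂ * (g 1 * b₁ * g 1)) = xb * yb + (u - u⁻¹) * (z * yb) := by
    have h : f₁ * f₂ * (g 1 * b₁ * g 1) = f₁ * (g 1 * (f₁ * b₁)) * g 1 := by
      simp only [mul_assoc]
      rw [m1]
    rw [h, tr_comm, hgfg (f₁ * b₁), map_add, map_smul, smul_eq_mul]
    have hA1 : Tr (f₂ * (f₁ * b₁)) = xb * yb := by
      rw [show f₂ * (f₁ * b₁) = f₁ * f₂ * b₁ from by simp only [mul_assoc]; rw [m5], W3]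
    have hB1 : Tr (f₁ * (f₂ * (g 1 * (f₁ * b₁)))) = z * yb := by
      rw [show f₁ * (f₂ * (g 1 * (f₁ * b₁))) = f₁ * g 1 * (f₁ * b₁) from by
        simp only [mul_assoc]; rw [m1, m6], tr_comm, ← mul_assoc, trfbf, Wfbg]
    rw [hA1, hB1]
  have trb2g : Tr (f₁ * (b₁ * b₁) * g 1) = z * (xb + (v - v⁻¹) * yb) := by
    rw [trg _ (mul_mem hf₁S (mul_mem hb₁S hb₁S))]
    rw [rel_bsq, mul_add, mul_one, mul_smul_comm, ← mul_assoc, hff, map_add, map_smul,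
      trf₁, trf₁b, smul_eq_mul, hxb, hyb]
  have W6 : Tr (f₁ * f₂ * (b₁ * g 1 * b₁)) = z * (xb + (v - v⁻¹) * yb) := by
    have h : f₁ * f₂ * (b₁ * g 1 * b₁) = f₁ * b₁ * g 1 * (f₁ * b₁) := by
      simp only [mul_assoc]
      rw [m7, m1]
    rw [h, tr_comm]
    rw [show f₁ * b₁ * (f₁ * b₁ * g 1) = f₁ * (b₁ * b₁) * g 1 from by
      simp only [mul_assoc]; rw [m3, m6]]
    exact trb2g
  have hgbg : g 1 * b₁ * g 1 = b 2 + (u - u⁻¹) • (g 1 * b₁ * e 1) := by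
    rw [← hb2g, mul_assoc, hgsq, mul_add, mul_one, mul_smul_comm, heg, ← mul_assoc,
      hb2g]
  have hgbgX : ∀ X : H, g 1 * (b₁ * (g 1 * X))
      = b 2 * X + (u - u⁻¹) • (g 1 * (b₁ * (e 1 * X))) := by
    intro X
    calc g 1 * (b₁ * (g 1 * X)) = g 1 * b₁ * g 1 * X := by simp only [mul_assoc]
      _ = b 2 * X + (u - u⁻¹) • (g 1 * (b₁ * (e 1 * X))) := by
          rw [hgbg, add_mul, smul_mul_assoc (u - u⁻¹) (g 1 * b₁ * e 1) X]
          simp only [mul_assoc]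
  have W7 : Tr (f₁ * f₂ * (g 1 * b₁ * g 1 * b₁))
      = yb * yb + (u - u⁻¹) * (z * (xb + (v - v⁻¹) * yb)) := by
    rw [show g 1 * b₁ * g 1 * b₁ = b₁ * g 1 * b₁ * g 1 from rel_bgbg.symm]
    have h : f₁ * f₂ * (b₁ * g 1 * b₁ * g 1) = f₁ * b₁ * (g 1 * (f₁ * b₁)) * g 1 := by
      simp only [mul_assoc]
      rw [m7, m1]
    rw [h, tr_comm]
    rw [show g 1 * (f₁ * b₁ * (g 1 * (f₁ * b₁)))
        = f₂ * (g 1 * (b₁ * (g 1 * (f₁ * b₁)))) from by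
      simp only [mul_assoc]; rw [m2]]
    rw [hgbgX (f₁ * b₁), mul_add, mul_smul_comm, map_add, map_smul, smul_eq_mul]
    have hA1 : Tr (f₂ * (b 2 * (f₁ * b₁))) = yb * yb := by
      rw [show f₂ * (b 2 * (f₁ * b₁)) = f₂ * b 2 * (f₁ * b₁) from by
        simp only [mul_assoc], tr_comm, hb2f₂, trMulBF₂ (f₁ * b₁) (mul_mem hf₁S hb₁S),
        trf₁b, hyb]
    have hB1 : Tr (f₂ * (g 1 * (b₁ * (e 1 * (f₁ * b₁))))) = z * (xb + (v - v⁻¹) * yb) := by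
      rw [show f₂ * (g 1 * (b₁ * (e 1 * (f₁ * b₁))))
          = g 1 * (f₁ * f₂ * (b₁ * b₁)) from by
        simp only [mul_assoc]
        rw [m1, me, m3, mef, m6, ← mul_assoc f₁ (e 1), hfe, mul_assoc]]
      rw [tr_comm]
      rw [show f₁ * f₂ * (b₁ * b₁) * g 1 = f₁ * (b₁ * b₁) * g 1 * f₁ from by
        simp only [mul_assoc]; rw [m7, m7, hf₂g]]
      rw [tr_comm]
      rw [show f₁ * (f₁ * (b₁ * b₁) * g 1) = f₁ * (b₁ * b₁) * g 1 from by
        simp only [mul_assoc]; rw [m6]]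
      exact trb2g
    rw [hA1, hB1]
  -- final assembly
  clear_value f₂ A B E
  rw [hfe]
  simp only [mul_add, mul_one, mul_smul_comm, map_add, map_smul, smul_eq_mul]
  rw [W1, W2, W3, W4a, W4b, W5, W6, W7]
  rw [show ((d : K) ^ 2)⁻¹ = c * c from by rw [hc, sq, mul_inv]]
  simp only [← Finset.sum_mul, ← Finset.mul_sum]
  rw [hxb, hyb]
  rcases eq_or_ne u 0 with hu | hu
  · subst hu
    simp only [inv_zero, sub_zero, zero_sub, neg_zero, zero_mul, mul_zero, zero_add,
      add_zero, zero_pow, ne_eq, OfNat.ofNat_ne_zero, not_false_eq_true, zero_smul]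
    ring
  · rcases eq_or_ne v 0 with hv | hv
    · subst hv
      simp only [inv_zero, sub_zero, zero_sub, neg_zero, zero_mul, mul_zero, zero_add,
        add_zero, zero_pow, ne_eq, OfNat.ofNat_ne_zero, not_false_eq_true]
      ring
    · field_simp
      ring
end

section
/- For every m ∈ Z/dZ and n ≥ 3, the Markov trace on Y_{d,n}^B(u,v) satisfies Tr(e_1^{(m)} e_2 b_1 g_{1,2}) = (1/d^2) Σ_{s,r=0}^{d−1} x_{−r} x_{−s+r} y_{m+s} + (u^2+2)(uz/d) Σ_{r=0}^{d−1} x_{−r} y_{m+r} + (u^2+1) u^2 z^2 y_m, where all indices of x and y are read modulo d. -/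
/-- For every `m ∈ ℤ/dℤ` and `n ≥ 3`, the Markov trace on `Y_{d,n}^B(u,v)`
satisfies `Tr(e₁^{(m)} e₂ b₁ g_{1,2}) = (1/d²) Σ_{s,r} x_{−r} x_{−s+r} y_{m+s}
  + (u²+2)(uz/d) Σ_r x_{−r} y_{m+r} + (u²+1)u²z² y_m`, indices read modulo `d`. -/
theorem stmt14
    {K : Type*} [Field K] [CharZero K] {H : Type*} [Ring H] [Algebra K H]
    (u v z : K) (d : ℕ) [NeZero d]
    (x y : ZMod d → K) (hx0 : x 0 = 1)
    (b₁ : H) (t g b : ℕ → H) (e : ℕ → H) (f₁ : H)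
    (he : ∀ i : ℕ, 1 ≤ i → e i = (d : K)⁻¹ • ∑ s : ZMod d, t i ^ s.val * t (i + 1) ^ (-s).val)
    (hf : f₁ = (d : K)⁻¹ • ∑ s : ZMod d, t 1 ^ s.val)
    (rel_comm : ∀ i j : ℕ, 1 ≤ i → i + 1 < j → g i * g j = g j * g i)
    (rel_braid : ∀ i : ℕ, 1 ≤ i → g i * g (i + 1) * g i = g (i + 1) * g i * g (i + 1))
    (rel_bg : ∀ i : ℕ, 2 ≤ i → b₁ * g i = g i * b₁)
    (rel_bgbg : b₁ * g 1 * b₁ * g 1 = g 1 * b₁ * g 1 * b₁)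
    (rel_tt : ∀ i j : ℕ, t i * t j = t j * t i)
    (rel_tg : ∀ i j : ℕ, 1 ≤ i → t j * g i = g i * t (Equiv.swap i (i + 1) j))
    (rel_tb : ∀ i : ℕ, t i * b₁ = b₁ * t i)
    (rel_td : ∀ i : ℕ, t i ^ d = 1)
    (rel_gsq : ∀ i : ℕ, 1 ≤ i → g i * g i = 1 + (u - u⁻¹) • (e i * g i))
    (rel_bsq : b₁ * b₁ = 1 + (v - v⁻¹) • (f₁ * b₁))
    (hb1 : b 1 = b₁)
    (hbrec : ∀ k : ℕ, 1 ≤ k → b (k + 1) * g k = g k * b k)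
    (Tr : H →ₗ[K] K)
    (tr_one : Tr 1 = 1)
    (tr_g : ∀ m : ℕ, 1 ≤ m → ∀ X ∈ frameBSub K b₁ t g m, Tr (X * g m) = z * Tr X)
    (tr_bt : ∀ m : ℕ, 1 ≤ m → ∀ k : ZMod d, ∀ X ∈ frameBSub K b₁ t g m,
      Tr (X * (b (m + 1) * t (m + 1) ^ k.val)) = y k * Tr X)
    (tr_t : ∀ m : ℕ, 1 ≤ m → ∀ k : ZMod d, ∀ X ∈ frameBSub K b₁ t g m,
      Tr (X * t (m + 1) ^ k.val) = x k * Tr X)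
    (tr_comm : ∀ X Y : H, Tr (X * Y) = Tr (Y * X))
    (e₁m : ZMod d → H)
    (he₁m : ∀ m : ZMod d,
      e₁m m = (d : K)⁻¹ • ∑ s : ZMod d, t 1 ^ (m + s).val * t 2 ^ (-s).val) :
    ∀ m : ZMod d,
      Tr (e₁m m * e 2 * b₁ * (1 + u • (g 1 + g 2) + u ^ 2 • (g 1 * g 2 + g 2 * g 1)
          + u ^ 3 • (g 1 * g 2 * g 1)))
        = ((d : K) ^ 2)⁻¹ * ∑ s : ZMod d, ∑ r : ZMod d, x (-r) * x (-s + r) * y (m + s)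
          + (u ^ 2 + 2) * (u * z / (d : K)) * ∑ r : ZMod d, x (-r) * y (m + r)
          + (u ^ 2 + 1) * u ^ 2 * z ^ 2 * y m := by
  intro m
  have hd0 : (d : K) ≠ 0 := Nat.cast_ne_zero.mpr (NeZero.ne d)
  -- helpers for reassociation rewriting
  have sw : ∀ {a b a' b' : H}, a * b = a' * b' → ∀ X : H, a * (b * X) = a' * (b' * X) :=
    fun h X => by rw [← mul_assoc, h, mul_assoc]
  have sw1 : ∀ {a b c : H}, a * b = c → ∀ X : H, a * (b * X) = c * X :=
    fun h X => by rw [← mul_assoc, h]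
  -- power modular arithmetic
  have htmod : ∀ (i : ℕ) (a c : ℕ), a % d = c % d → t i ^ a = t i ^ c := by
    intro i a c h
    conv_lhs => rw [← Nat.div_add_mod a d]
    conv_rhs => rw [← Nat.div_add_mod c d]
    rw [pow_add, pow_add, pow_mul, pow_mul, rel_td, one_pow, one_pow, h]
  have hT : ∀ (i : ℕ) (k l : ZMod d), t i ^ k.val * t i ^ l.val = t i ^ (k + l).val := by
    intro i k l
    rw [← pow_add]
    exact htmod i _ _ (by simp [ZMod.val_add, Nat.mod_mod_of_dvd])
  have hTT : ∀ (i j : ℕ) (k l : ZMod d),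
      t i ^ k.val * t j ^ l.val = t j ^ l.val * t i ^ k.val :=
    fun i j k l => ((show Commute (t i) (t j) from rel_tt i j).pow_pow k.val l.val).eq
  have hTb : ∀ (i : ℕ) (k : ZMod d), t i ^ k.val * b₁ = b₁ * t i ^ k.val :=
    fun i k => ((show Commute (t i) b₁ from rel_tb i).pow_left k.val).eq
  -- commutation of powers of t with g
  have htgp : ∀ (i j : ℕ), 1 ≤ i → ∀ n : ℕ,
      t j ^ n * g i = g i * t (Equiv.swap i (i + 1) j) ^ n := by
    intro i j hi n
    induction n with
    | zero => simp
    | succ n ih =>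
        rw [pow_succ, mul_assoc, rel_tg i j hi, ← mul_assoc, ih, mul_assoc, ← pow_succ]
  have h12 : ∀ k : ZMod d, t 1 ^ k.val * g 1 = g 1 * t 2 ^ k.val := by
    intro k; have := htgp 1 1 le_rfl k.val; simpa using this
  have h21 : ∀ k : ZMod d, t 2 ^ k.val * g 1 = g 1 * t 1 ^ k.val := by
    intro k; have := htgp 1 2 le_rfl k.val; simpa using this
  have h31 : ∀ k : ZMod d, t 3 ^ k.val * g 1 = g 1 * t 3 ^ k.val := by
    intro k; have := htgp 1 3 le_rfl k.val
    have hs : Equiv.swap (1:ℕ) 2 3 = 3 :=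
      Equiv.swap_apply_of_ne_of_ne (by norm_num) (by norm_num)
    simpa [hs] using this
  have h23 : ∀ k : ZMod d, t 2 ^ k.val * g 2 = g 2 * t 3 ^ k.val := by
    intro k; have := htgp 2 2 one_le_two k.val; simpa using this
  have h32 : ∀ k : ZMod d, t 3 ^ k.val * g 2 = g 2 * t 2 ^ k.val := by
    intro k; have := htgp 2 3 one_le_two k.val; simpa using this
  have h13 : ∀ k : ZMod d, t 1 ^ k.val * g 2 = g 2 * t 1 ^ k.val := by
    intro k; have := htgp 2 1 one_le_two k.val
    have hs : Equiv.swap (2:ℕ) 3 1 = 1 :=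
      Equiv.swap_apply_of_ne_of_ne (by norm_num) (by norm_num)
    simpa [hs] using this
  -- specialized trace rules and relations with clean numerals
  have tr_t1 : ∀ (k : ZMod d), ∀ X ∈ frameBSub K b₁ t g 1,
      Tr (X * t 2 ^ k.val) = x k * Tr X := by simpa using tr_t 1 le_rfl
  have tr_t2 : ∀ (k : ZMod d), ∀ X ∈ frameBSub K b₁ t g 2,
      Tr (X * t 3 ^ k.val) = x k * Tr X := by simpa using tr_t 2 one_le_two
  have tr_bt1 : ∀ (k : ZMod d), ∀ X ∈ frameBSub K b₁ t g 1,
      Tr (X * (b 2 * t 2 ^ k.val)) = y k * Tr X := by simpa using tr_bt 1 le_rfl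
  have he1 : e 1 = (d : K)⁻¹ • ∑ s : ZMod d, t 1 ^ s.val * t 2 ^ (-s).val := by
    simpa using he 1 le_rfl
  have he2 : e 2 = (d : K)⁻¹ • ∑ s : ZMod d, t 2 ^ s.val * t 3 ^ (-s).val := by
    simpa using he 2 one_le_two
  have hb2g : b 2 * g 1 = g 1 * b₁ := by
    have := hbrec 1 le_rfl; rwa [hb1] at this
  -- e 1 commutes with g 1
  have he1g : e 1 * g 1 = g 1 * e 1 := by
    rw [he1, smul_mul_assoc, mul_smul_comm]
    congr 1
    rw [Finset.sum_mul, Finset.mul_sum]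
    refine Fintype.sum_equiv (Equiv.neg (ZMod d)) _ _ fun p => ?_
    simp only [Equiv.neg_apply, neg_neg]
    calc t 1 ^ p.val * t 2 ^ (-p).val * g 1
        = t 1 ^ p.val * (g 1 * t 1 ^ (-p).val) := by rw [mul_assoc, h21 (-p)]
      _ = (g 1 * t 2 ^ p.val) * t 1 ^ (-p).val := by rw [← mul_assoc, h12 p]
      _ = g 1 * (t 1 ^ (-p).val * t 2 ^ p.val) := by rw [mul_assoc, hTT 2 1 p (-p)]
  -- the inverse of g 1
  set q : H := g 1 - (u - u⁻¹) • e 1 with hqdef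
  have hgq : g 1 * q = 1 := by
    rw [hqdef, mul_sub, mul_smul_comm, rel_gsq 1 le_rfl, ← he1g]
    simp
  have hqg : q * g 1 = 1 := by
    rw [hqdef, sub_mul, smul_mul_assoc, rel_gsq 1 le_rfl]
    simp
  have hb2 : b 2 = g 1 * (b₁ * q) :=
    calc b 2 = b 2 * (g 1 * q) := by rw [hgq, mul_one]
      _ = (b 2 * g 1) * q := by rw [mul_assoc]
      _ = g 1 * (b₁ * q) := by rw [hb2g, mul_assoc]
  have hq1 : ∀ k : ZMod d, q * t 1 ^ k.val = t 2 ^ k.val * q := by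
    intro k
    calc q * t 1 ^ k.val = q * (t 1 ^ k.val * (g 1 * q)) := by rw [hgq, mul_one]
      _ = q * ((t 1 ^ k.val * g 1) * q) := by rw [mul_assoc]
      _ = q * ((g 1 * t 2 ^ k.val) * q) := by rw [h12 k]
      _ = (q * g 1) * (t 2 ^ k.val * q) := by simp only [mul_assoc]
      _ = t 2 ^ k.val * q := by rw [hqg, one_mul]
  have hq2 : ∀ k : ZMod d, q * t 2 ^ k.val = t 1 ^ k.val * q := by
    intro k
    calc q * t 2 ^ k.val = q * (t 2 ^ k.val * (g 1 * q)) := by rw [hgq, mul_one]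
      _ = q * ((t 2 ^ k.val * g 1) * q) := by rw [mul_assoc]
      _ = q * ((g 1 * t 1 ^ k.val) * q) := by rw [h21 k]
      _ = (q * g 1) * (t 1 ^ k.val * q) := by simp only [mul_assoc]
      _ = t 1 ^ k.val * q := by rw [hqg, one_mul]
  have hb2t1 : ∀ k : ZMod d, b 2 * t 1 ^ k.val = t 1 ^ k.val * b 2 := by
    intro k
    calc b 2 * t 1 ^ k.val = g 1 * (b₁ * (q * t 1 ^ k.val)) := by
          rw [hb2]; simp only [mul_assoc]
      _ = g 1 * (b₁ * (t 2 ^ k.val * q)) := by rw [hq1 k]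
      _ = g 1 * (t 2 ^ k.val * (b₁ * q)) := by rw [sw (hTb 2 k).symm]
      _ = (g 1 * t 2 ^ k.val) * (b₁ * q) := by rw [← mul_assoc]
      _ = (t 1 ^ k.val * g 1) * (b₁ * q) := by rw [← h12 k]
      _ = t 1 ^ k.val * b 2 := by rw [hb2]; simp only [mul_assoc]
  have hb2t2 : ∀ k : ZMod d, b 2 * t 2 ^ k.val = t 2 ^ k.val * b 2 := by
    intro k
    calc b 2 * t 2 ^ k.val = g 1 * (b₁ * (q * t 2 ^ k.val)) := by
          rw [hb2]; simp only [mul_assoc]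
      _ = g 1 * (b₁ * (t 1 ^ k.val * q)) := by rw [hq2 k]
      _ = g 1 * (t 1 ^ k.val * (b₁ * q)) := by rw [sw (hTb 1 k).symm]
      _ = (g 1 * t 1 ^ k.val) * (b₁ * q) := by rw [← mul_assoc]
      _ = (t 2 ^ k.val * g 1) * (b₁ * q) := by rw [← h21 k]
      _ = t 2 ^ k.val * b 2 := by rw [hb2]; simp only [mul_assoc]
  -- memberships
  have memt : ∀ n i : ℕ, 1 ≤ i → i ≤ n → t i ∈ frameBSub K b₁ t g n := fun n i h1 h2 =>
    Algebra.subset_adjoin (Set.mem_union_left _ (Set.mem_union_right _ ⟨i, ⟨h1, h2⟩, rfl⟩))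
  have memg : ∀ n i : ℕ, 1 ≤ i → i ≤ n - 1 → g i ∈ frameBSub K b₁ t g n := fun n i h1 h2 =>
    Algebra.subset_adjoin (Set.mem_union_right _ ⟨i, ⟨h1, h2⟩, rfl⟩)
  have memb : ∀ n : ℕ, b₁ ∈ frameBSub K b₁ t g n := fun n =>
    Algebra.subset_adjoin (Set.mem_union_left _ (Set.mem_union_left _ rfl))
  -- base trace values
  have trx : ∀ k : ZMod d, Tr (t 1 ^ k.val) = x k := by
    intro k
    have h2 := tr_t1 k 1 (one_mem _)
    rw [one_mul, tr_one, mul_one] at h2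
    have e2 : t 2 ^ k.val = g 1 * (t 1 ^ k.val * q) :=
      calc t 2 ^ k.val = t 2 ^ k.val * (g 1 * q) := by rw [hgq, mul_one]
        _ = (t 2 ^ k.val * g 1) * q := by rw [mul_assoc]
        _ = g 1 * (t 1 ^ k.val * q) := by rw [h21 k, mul_assoc]
    rw [e2, tr_comm, mul_assoc, hqg, mul_one] at h2
    exact h2
  have try' : ∀ k : ZMod d, Tr (b₁ * t 1 ^ k.val) = y k := by
    intro k
    have h2 := tr_bt1 k 1 (one_mem _)
    rw [one_mul, tr_one, mul_one] at h2
    have e2 : b 2 * t 2 ^ k.val = g 1 * ((b₁ * t 1 ^ k.val) * q) :=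
      calc b 2 * t 2 ^ k.val = g 1 * (b₁ * (q * t 2 ^ k.val)) := by
            rw [hb2]; simp only [mul_assoc]
        _ = g 1 * (b₁ * (t 1 ^ k.val * q)) := by rw [hq2 k]
        _ = g 1 * ((b₁ * t 1 ^ k.val) * q) := by rw [← mul_assoc b₁]
    rw [e2, tr_comm, mul_assoc, hqg, mul_one] at h2
    exact h2
  -- level-1 building blocks
  have L0i : ∀ a b : ZMod d, Tr (t 1 ^ a.val * t 2 ^ b.val * b₁) = x b * y a := by
    intro a b
    have E : t 1 ^ a.val * t 2 ^ b.val * b₁ = (t 1 ^ a.val * b₁) * t 2 ^ b.val := by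
      simp only [mul_assoc]; rw [hTb 2 b]
    rw [E, tr_t1 b _ (mul_mem (pow_mem (memt 1 1 le_rfl le_rfl) _) (memb 1)),
      tr_comm, try' a]
  have L1i : ∀ a b : ZMod d, Tr (t 1 ^ a.val * t 2 ^ b.val * b₁ * g 1) = z * y (a + b) := by
    intro a b
    have E1 : t 1 ^ a.val * t 2 ^ b.val * b₁ * g 1
        = t 1 ^ a.val * b₁ * g 1 * t 1 ^ b.val := by
      simp only [mul_assoc]; rw [sw (hTb 2 b), h21 b]
    rw [E1, tr_comm]
    have E2 : t 1 ^ b.val * (t 1 ^ a.val * b₁ * g 1) = b₁ * t 1 ^ (a + b).val * g 1 := by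
      simp only [mul_assoc]; rw [sw1 (hT 1 b a), sw (hTb 1 (b + a)), add_comm b a]
    rw [E2, tr_g 1 le_rfl _ (mul_mem (memb 1) (pow_mem (memt 1 1 le_rfl le_rfl) _)),
      try' (a + b)]
  -- the six words
  have L0 : ∀ a b c : ZMod d,
      Tr (t 1 ^ a.val * t 2 ^ b.val * t 3 ^ c.val * b₁) = x c * (x b * y a) := by
    intro a b c
    have E : t 1 ^ a.val * t 2 ^ b.val * t 3 ^ c.val * b₁
        = (t 1 ^ a.val * t 2 ^ b.val * b₁) * t 3 ^ c.val := by
      simp only [mul_assoc]; rw [hTb 3 c]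
    rw [E, tr_t2 c _ (mul_mem (mul_mem (pow_mem (memt 2 1 le_rfl one_le_two) _)
      (pow_mem (memt 2 2 one_le_two le_rfl) _)) (memb 2)), L0i a b]
  have L1 : ∀ a b c : ZMod d,
      Tr (t 1 ^ a.val * t 2 ^ b.val * t 3 ^ c.val * b₁ * g 1)
        = x c * (z * y (a + b)) := by
    intro a b c
    have E : t 1 ^ a.val * t 2 ^ b.val * t 3 ^ c.val * b₁ * g 1
        = (t 1 ^ a.val * t 2 ^ b.val * b₁ * g 1) * t 3 ^ c.val := by
      simp only [mul_assoc]; rw [sw (hTb 3 c), h31 c]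
    rw [E, tr_t2 c _ (mul_mem (mul_mem (mul_mem (pow_mem (memt 2 1 le_rfl one_le_two) _)
      (pow_mem (memt 2 2 one_le_two le_rfl) _)) (memb 2)) (memg 2 1 le_rfl (by norm_num))),
      L1i a b]
  have L2 : ∀ a b c : ZMod d,
      Tr (t 1 ^ a.val * t 2 ^ b.val * t 3 ^ c.val * b₁ * g 2)
        = z * (x (b + c) * y a) := by
    intro a b c
    have E1 : t 1 ^ a.val * t 2 ^ b.val * t 3 ^ c.val * b₁ * g 2
        = (t 1 ^ a.val * t 2 ^ b.val * b₁ * g 2) * t 2 ^ c.val := by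
      simp only [mul_assoc]; rw [sw (hTb 3 c), h32 c]
    rw [E1, tr_comm]
    have E2 : t 2 ^ c.val * (t 1 ^ a.val * t 2 ^ b.val * b₁ * g 2)
        = (t 1 ^ a.val * t 2 ^ (b + c).val * b₁) * g 2 := by
      simp only [mul_assoc]; rw [sw (hTT 2 1 c a), sw1 (hT 2 c b), add_comm c b]
    rw [E2, tr_g 2 one_le_two _ (mul_mem (mul_mem (pow_mem (memt 2 1 le_rfl one_le_two) _)
      (pow_mem (memt 2 2 one_le_two le_rfl) _)) (memb 2)), L0i a (b + c)]
  have L12 : ∀ a b c : ZMod d,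
      Tr (t 1 ^ a.val * t 2 ^ b.val * t 3 ^ c.val * b₁ * (g 1 * g 2))
        = z * (z * y (a + b + c)) := by
    intro a b c
    have E1 : t 1 ^ a.val * t 2 ^ b.val * t 3 ^ c.val * b₁ * (g 1 * g 2)
        = (t 1 ^ a.val * t 2 ^ b.val * b₁ * g 1 * g 2) * t 2 ^ c.val := by
      simp only [mul_assoc]; rw [sw (hTb 3 c), sw (h31 c), h32 c]
    rw [E1, tr_comm]
    have E2 : t 2 ^ c.val * (t 1 ^ a.val * t 2 ^ b.val * b₁ * g 1 * g 2)
        = (t 1 ^ a.val * t 2 ^ (b + c).val * b₁ * g 1) * g 2 := by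
      simp only [mul_assoc]; rw [sw (hTT 2 1 c a), sw1 (hT 2 c b), add_comm c b]
    rw [E2, tr_g 2 one_le_two _ (mul_mem (mul_mem (mul_mem
      (pow_mem (memt 2 1 le_rfl one_le_two) _) (pow_mem (memt 2 2 one_le_two le_rfl) _))
      (memb 2)) (memg 2 1 le_rfl (by norm_num))), L1i a (b + c), add_assoc]
  have L21 : ∀ a b c : ZMod d,
      Tr (t 1 ^ a.val * t 2 ^ b.val * t 3 ^ c.val * b₁ * (g 2 * g 1))
        = z * (z * y (a + b + c)) := by
    intro a b c
    have E1 : t 1 ^ a.val * t 2 ^ b.val * t 3 ^ c.val * b₁ * (g 2 * g 1)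
        = (t 1 ^ a.val * t 2 ^ b.val * b₁ * g 2 * g 1) * t 1 ^ c.val := by
      simp only [mul_assoc]; rw [sw (hTb 3 c), sw (h32 c), h21 c]
    rw [E1, tr_comm]
    have E2 : t 1 ^ c.val * (t 1 ^ a.val * t 2 ^ b.val * b₁ * g 2 * g 1)
        = (t 1 ^ (a + c).val * t 2 ^ b.val * b₁ * g 2) * g 1 := by
      simp only [mul_assoc]; rw [sw1 (hT 1 c a), add_comm c a]
    rw [E2, tr_comm]
    have E3 : (t 2 ^ (a + c).val * t 1 ^ b.val * g 1 * b₁) * g 2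
        = g 1 * (t 1 ^ (a + c).val * t 2 ^ b.val * b₁ * g 2) := by
      simp only [mul_assoc]; rw [sw (h12 b), sw (h21 (a + c))]
    rw [← E3, tr_g 2 one_le_two _ (mul_mem (mul_mem (mul_mem
      (pow_mem (memt 2 2 one_le_two le_rfl) _) (pow_mem (memt 2 1 le_rfl one_le_two) _))
      (memg 2 1 le_rfl (by norm_num))) (memb 2)), tr_comm]
    have E5 : b₁ * (t 2 ^ (a + c).val * t 1 ^ b.val * g 1)
        = (b₁ * t 1 ^ b.val * g 1) * t 1 ^ (a + c).val := by
      simp only [mul_assoc]; rw [sw (hTT 2 1 (a + c) b), h21 (a + c)]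
    rw [E5, tr_comm]
    have E6 : t 1 ^ (a + c).val * (b₁ * t 1 ^ b.val * g 1)
        = (b₁ * t 1 ^ (a + b + c).val) * g 1 := by
      simp only [mul_assoc]
      rw [sw (hTb 1 (a + c)), sw1 (hT 1 (a + c) b),
        show a + c + b = a + b + c from by ring]
    rw [E6, tr_g 1 le_rfl _ (mul_mem (memb 1) (pow_mem (memt 1 1 le_rfl le_rfl) _)),
      try' (a + b + c)]
  have L121 : ∀ a β c : ZMod d,
      Tr (t 1 ^ a.val * t 2 ^ β.val * t 3 ^ c.val * b₁ * (g 1 * g 2 * g 1))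
        = z * (y (a + c) * x β + (u - u⁻¹) * (z * y (a + β + c))) := by
    intro a β c
    have E1 : t 1 ^ a.val * t 2 ^ β.val * t 3 ^ c.val * b₁ * (g 1 * g 2 * g 1)
        = (t 1 ^ a.val * t 2 ^ β.val * b₁ * g 1 * g 2 * g 1) * t 1 ^ c.val := by
      simp only [mul_assoc]; rw [sw (hTb 3 c), sw (h31 c), sw (h32 c), h21 c]
    rw [E1, tr_comm]
    have E2 : t 1 ^ c.val * (t 1 ^ a.val * t 2 ^ β.val * b₁ * g 1 * g 2 * g 1)
        = (t 1 ^ (a + c).val * t 2 ^ β.val * b₁ * g 1 * g 2) * g 1 := by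
      simp only [mul_assoc]; rw [sw1 (hT 1 c a), add_comm c a]
    rw [E2, tr_comm]
    have E3 : (t 2 ^ (a + c).val * t 1 ^ β.val * g 1 * b₁ * g 1) * g 2
        = g 1 * (t 1 ^ (a + c).val * t 2 ^ β.val * b₁ * g 1 * g 2) := by
      simp only [mul_assoc]; rw [sw (h12 β), sw (h21 (a + c))]
    rw [← E3, tr_g 2 one_le_two _ (mul_mem (mul_mem (mul_mem (mul_mem
      (pow_mem (memt 2 2 one_le_two le_rfl) _) (pow_mem (memt 2 1 le_rfl one_le_two) _))
      (memg 2 1 le_rfl (by norm_num))) (memb 2)) (memg 2 1 le_rfl (by norm_num)))]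
    have hgbg : g 1 * (b₁ * g 1) = b 2 + (u - u⁻¹) • (b 2 * (e 1 * g 1)) := by
      rw [← mul_assoc, ← hb2g, mul_assoc, rel_gsq 1 le_rfl, mul_add, mul_one,
        mul_smul_comm]
    have E4 : t 2 ^ (a + c).val * t 1 ^ β.val * g 1 * b₁ * g 1
        = t 2 ^ (a + c).val * (t 1 ^ β.val * b 2)
          + (u - u⁻¹) • (t 2 ^ (a + c).val * (t 1 ^ β.val * (b 2 * (e 1 * g 1)))) := by
      simp only [mul_assoc]
      rw [hgbg]
      simp only [mul_add, mul_smul_comm]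
    rw [E4, map_add, map_smul, smul_eq_mul]
    have PA : Tr (t 2 ^ (a + c).val * (t 1 ^ β.val * b 2)) = y (a + c) * x β := by
      have E : t 2 ^ (a + c).val * (t 1 ^ β.val * b 2)
          = t 1 ^ β.val * (b 2 * t 2 ^ (a + c).val) := by
        rw [sw (hTT 2 1 (a + c) β), ← hb2t2 (a + c)]
      rw [E, tr_bt1 (a + c) _ (pow_mem (memt 1 1 le_rfl le_rfl) _), trx β]
    have PB : Tr (t 2 ^ (a + c).val * (t 1 ^ β.val * (b 2 * (e 1 * g 1))))
        = z * y (a + β + c) := by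
      rw [he1]
      simp only [smul_mul_assoc, mul_smul_comm, Finset.sum_mul, Finset.mul_sum,
        map_smul, map_sum, smul_eq_mul]
      have hterm : ∀ p : ZMod d,
          Tr (t 2 ^ (a + c).val * (t 1 ^ β.val * (b 2 * (t 1 ^ p.val * t 2 ^ (-p).val * g 1))))
            = z * y (a + β + c) := by
        intro p
        have Ea : t 2 ^ (a + c).val * (t 1 ^ β.val * (b 2 * (t 1 ^ p.val * t 2 ^ (-p).val * g 1)))
            = t 1 ^ (β + p).val * g 1 * t 1 ^ (a + c - p).val * b₁ := by
          simp only [mul_assoc]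
          rw [sw (hb2t1 p), sw (hb2t2 (-p)), hb2g, sw1 (hT 1 β p),
            sw (hTT 2 1 (a + c) (β + p)), sw1 (hT 2 (a + c) (-p)),
            show a + c + -p = a + c - p from by ring, sw (h21 (a + c - p))]
        rw [Ea, tr_comm]
        have Eb : b₁ * (t 1 ^ (β + p).val * g 1 * t 1 ^ (a + c - p).val)
            = (b₁ * t 1 ^ (β + p).val * g 1) * t 1 ^ (a + c - p).val := by
          simp only [mul_assoc]
        rw [Eb, tr_comm]
        have Ec : t 1 ^ (a + c - p).val * (b₁ * t 1 ^ (β + p).val * g 1)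
            = (b₁ * t 1 ^ (a + β + c).val) * g 1 := by
          simp only [mul_assoc]
          rw [sw (hTb 1 (a + c - p)), sw1 (hT 1 (a + c - p) (β + p)),
            show a + c - p + (β + p) = a + β + c from by ring]
        rw [Ec, tr_g 1 le_rfl _ (mul_mem (memb 1) (pow_mem (memt 1 1 le_rfl le_rfl) _)),
          try' (a + β + c)]
      simp only [hterm, Finset.sum_const, Finset.card_univ, ZMod.card, nsmul_eq_mul]
      rw [← mul_assoc, mul_inv_cancel₀ hd0, one_mul]
    rw [PA, PB]
  -- expand the product into a double sum
  set G : H := 1 + u • (g 1 + g 2) + u ^ 2 • (g 1 * g 2 + g 2 * g 1)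
      + u ^ 3 • (g 1 * g 2 * g 1) with hG
  have hTr : Tr (e₁m m * e 2 * b₁ * G)
      = (d : K)⁻¹ * ((d : K)⁻¹ * ∑ s : ZMod d, ∑ r : ZMod d,
          Tr (t 1 ^ (m + s).val * t 2 ^ (-s).val * (t 2 ^ r.val * t 3 ^ (-r).val) * b₁ * G)) := by
    rw [he₁m m, he2]
    simp only [smul_mul_assoc, mul_smul_comm, Finset.sum_mul, Finset.mul_sum,
      map_smul, map_sum, smul_eq_mul]
    rw [Finset.sum_comm]
  have keyF : ∀ s r : ZMod d,
      Tr (t 1 ^ (m + s).val * t 2 ^ (-s).val * (t 2 ^ r.val * t 3 ^ (-r).val) * b₁ * G)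
        = x (-r) * x (-s + r) * y (m + s)
          + (u * z) * (x (-r) * y (m + r))
          + (u * z) * (x (-s) * y (m + s))
          + u ^ 2 * (z ^ 2 * y m)
          + u ^ 2 * (z ^ 2 * y m)
          + (u ^ 3 * z) * (x (-s + r) * y (m + (s - r)))
          + (u ^ 3 * (u - u⁻¹)) * (z ^ 2 * y m) := by
    intro s r
    have hP : t 1 ^ (m + s).val * t 2 ^ (-s).val * (t 2 ^ r.val * t 3 ^ (-r).val) * b₁
        = t 1 ^ (m + s).val * t 2 ^ (-s + r).val * t 3 ^ (-r).val * b₁ := by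
      simp only [mul_assoc]; rw [sw1 (hT 2 (-s) r)]
    rw [hP, hG]
    simp only [mul_add, mul_one, mul_smul_comm, smul_add, map_add, map_smul, smul_eq_mul]
    rw [L0, L1, L2, L12, L21, L121,
      show m + s + (-s + r) + -r = m from by ring,
      show m + s + (-s + r) = m + r from by ring,
      show -s + r + -r = -s from by ring,
      show m + s + -r = m + (s - r) from by ring]
    ring
  rw [hTr, Finset.sum_congr rfl fun s _ => Finset.sum_congr rfl fun r _ => keyF s r]
  -- now pure algebra in K
  set R : K := ∑ r : ZMod d, x (-r) * y (m + r) with hR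
  set S : K := ∑ s : ZMod d, ∑ r : ZMod d, x (-r) * x (-s + r) * y (m + s) with hS
  have hre : ∀ s : ZMod d,
      (∑ r : ZMod d, x (-s + r) * y (m + (s - r))) = R := by
    intro s
    rw [hR]
    refine Fintype.sum_equiv (Equiv.subLeft s) _ _ fun r => ?_
    simp only [Equiv.subLeft_apply]
    rw [show -(s - r) = -s + r from by ring]
  have hsum : ∀ s : ZMod d,
      (∑ r : ZMod d, (x (-r) * x (-s + r) * y (m + s)
          + (u * z) * (x (-r) * y (m + r))
          + (u * z) * (x (-s) * y (m + s))
          + u ^ 2 * (z ^ 2 * y m)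
          + u ^ 2 * (z ^ 2 * y m)
          + (u ^ 3 * z) * (x (-s + r) * y (m + (s - r)))
          + (u ^ 3 * (u - u⁻¹)) * (z ^ 2 * y m)))
        = (∑ r : ZMod d, x (-r) * x (-s + r) * y (m + s))
          + (u * z) * R + (d : K) * ((u * z) * (x (-s) * y (m + s)))
          + (d : K) * (u ^ 2 * (z ^ 2 * y m)) + (d : K) * (u ^ 2 * (z ^ 2 * y m))
          + (u ^ 3 * z) * R + (d : K) * ((u ^ 3 * (u - u⁻¹)) * (z ^ 2 * y m)) := by
    intro s
    simp only [Finset.sum_add_distrib, ← Finset.mul_sum, hre, Finset.sum_const,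
      Finset.card_univ, ZMod.card, nsmul_eq_mul, ← hR]
    ring
  rw [Finset.sum_congr rfl fun s _ => hsum s]
  simp only [Finset.sum_add_distrib, ← Finset.mul_sum, Finset.sum_const,
    Finset.card_univ, ZMod.card, nsmul_eq_mul, ← hR, ← hS]
  have hu4 : u ^ 3 * (u - u⁻¹) = u ^ 4 - u ^ 2 := by
    rcases eq_or_ne u 0 with h | h
    · simp [h]
    · field_simp
  rw [hu4]
  field_simp
  ring
end

section
/- For m ∈ Z/dZ and n ≥ 3, set A_1 := Tr(e_1^{(m)} e_2 b_1 g_1 b_1), A_2 := Tr(e_1^{(m)} e_2 b_1 g_1 b_1 g_1), A_3 := Tr(e_1^{(m)} e_2 b_1 g_1 b_1 g_2), A_4 := Tr(e_1^{(m)} e_2 b_1 g_1 b_1 g_1 g_2), A_5 := Tr(e_1^{(m)} e_2 b_1 g_1 b_1 g_2 g_1), A_6 := Tr(e_1^{(m)} e_2 b_1 g_1 b_1 g_1 g_2 g_1). Then: A_1 = (z/d) Σ_{s} x_{m+s} x_{−s} + (v−v^{−1})(z/d^2) Σ_{r,s} x_{−s} y_{m+s+r}; A_2 = (1/d^2) Σ_{r,s}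 x_{−r} y_{m+s} y_{r−s} + (u−u^{−1}) A_1; A_3 = z^2 x_m + (v−v^{−1})(z^2/d) Σ_r y_r; A_4 = (z/d) Σ_s y_{m+s} y_{−s} + (u−u^{−1}) A_3; A_5 = A_4; A_6 = A_3 + (u−u^{−1}) A_4; and consequently Tr(e_1^{(m)} e_2 b_1 g_1 b_1 g_{1,2}) = A_1 + u(A_2 + A_3) + u^2(A_4 + A_5) + u^3 A_6. All sums run over {0,…,d−1} and all indices of x and y are read modulo d. -/
set_option linter.unusedSectionVars false
set_option maxHeartbeats 1000000

section Stmt15Aux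

variable {K : Type*} [Field K] [CharZero K] {H : Type*} [Ring H] [Algebra K H]
    {u v z : K} {d : ℕ} [NeZero d]
    {x y : ZMod d → K}
    {b₁ : H} {t g b : ℕ → H} {e : ℕ → H} {f₁ : H}

namespace Stmt15

/-- reduce powers of `t i` mod `d` -/
theorem pow_mod (rel_td : ∀ i : ℕ, t i ^ d = 1) (i n : ℕ) : t i ^ n = t i ^ (n % d) := by
  conv_lhs => rw [← Nat.div_add_mod n d, pow_add, pow_mul, rel_td, one_pow, one_mul]

theorem pow_val_mul (rel_td : ∀ i : ℕ, t i ^ d = 1) (i : ℕ) (a c : ZMod d) :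
    t i ^ a.val * t i ^ c.val = t i ^ (a + c).val := by
  rw [← pow_add, pow_mod rel_td i (a.val + c.val), ← ZMod.val_add]

theorem t_eq_pow_one (rel_td : ∀ i : ℕ, t i ^ d = 1) (i : ℕ) :
    t i = t i ^ (1 : ZMod d).val := by
  rw [ZMod.val_one_eq_one_mod, ← pow_mod rel_td i 1, pow_one]

theorem swap_pow {i j j' : ℕ} (hrel : t j * g i = g i * t j') (n : ℕ) :
    t j ^ n * g i = g i * t j' ^ n :=
  ((show SemiconjBy (g i) (t j') (t j) from hrel.symm).pow_right n).symm

theorem t1g1 (rel_tg : ∀ i j : ℕ, 1 ≤ i → t j * g i = g i * t (Equiv.swap i (i + 1) j))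
    (n : ℕ) : t 1 ^ n * g 1 = g 1 * t 2 ^ n :=
  swap_pow (by simpa using rel_tg 1 1 le_rfl) n

theorem t2g1 (rel_tg : ∀ i j : ℕ, 1 ≤ i → t j * g i = g i * t (Equiv.swap i (i + 1) j))
    (n : ℕ) : t 2 ^ n * g 1 = g 1 * t 1 ^ n :=
  swap_pow (by simpa using rel_tg 1 2 le_rfl) n

theorem t3g1 (rel_tg : ∀ i j : ℕ, 1 ≤ i → t j * g i = g i * t (Equiv.swap i (i + 1) j))
    (n : ℕ) : t 3 ^ n * g 1 = g 1 * t 3 ^ n :=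
  swap_pow (by simpa [Equiv.swap_apply_of_ne_of_ne] using rel_tg 1 3 le_rfl) n

theorem t3g2 (rel_tg : ∀ i j : ℕ, 1 ≤ i → t j * g i = g i * t (Equiv.swap i (i + 1) j))
    (n : ℕ) : t 3 ^ n * g 2 = g 2 * t 2 ^ n :=
  swap_pow (by simpa using rel_tg 2 3 one_le_two) n

theorem comm_tt (rel_tt : ∀ i j : ℕ, t i * t j = t j * t i) (i j a c : ℕ) :
    Commute (t i ^ a) (t j ^ c) :=
  (show Commute (t i) (t j) from rel_tt i j).pow_pow a c

theorem comm_tb (rel_tb : ∀ i : ℕ, t i * b₁ = b₁ * t i) (i a : ℕ) :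
    Commute (t i ^ a) b₁ :=
  (show Commute (t i) b₁ from rel_tb i).pow_left a

end Stmt15
end Stmt15Aux

section Stmt15Aux
variable {K : Type*} [Field K] [CharZero K] {H : Type*} [Ring H] [Algebra K H]
    {u v z : K} {d : ℕ} [NeZero d]
    {x y : ZMod d → K}
    {b₁ : H} {t g b : ℕ → H} {e : ℕ → H} {f₁ : H}
namespace Stmt15

theorem mul_pow_val (rel_td : ∀ i : ℕ, t i ^ d = 1) (i : ℕ) (c : ZMod d) :
    t i * t i ^ c.val = t i ^ ((1 : ZMod d) + c).val := by
  have h1 : t i * t i ^ c.val = t i ^ (1 + c.val) := by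
    rw [Nat.add_comm, pow_succ']
  rw [h1, pow_mod rel_td i (1 + c.val)]
  congr 1
  rw [ZMod.val_add, ZMod.val_one_eq_one_mod, Nat.mod_add_mod]

theorem he1' (he : ∀ i : ℕ, 1 ≤ i →
      e i = (d : K)⁻¹ • ∑ s : ZMod d, t i ^ s.val * t (i + 1) ^ (-s).val) :
    e 1 = (d : K)⁻¹ • ∑ s : ZMod d, t 1 ^ s.val * t 2 ^ (-s).val := by
  simpa using he 1 le_rfl

theorem he2' (he : ∀ i : ℕ, 1 ≤ i →
      e i = (d : K)⁻¹ • ∑ s : ZMod d, t i ^ s.val * t (i + 1) ^ (-s).val) :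
    e 2 = (d : K)⁻¹ • ∑ s : ZMod d, t 2 ^ s.val * t 3 ^ (-s).val := by
  simpa using he 2 one_le_two

theorem e1_g1 (rel_tt : ∀ i j : ℕ, t i * t j = t j * t i)
    (rel_tg : ∀ i j : ℕ, 1 ≤ i → t j * g i = g i * t (Equiv.swap i (i + 1) j))
    (he : ∀ i : ℕ, 1 ≤ i →
      e i = (d : K)⁻¹ • ∑ s : ZMod d, t i ^ s.val * t (i + 1) ^ (-s).val) :
    e 1 * g 1 = g 1 * e 1 := by
  rw [he1' he, smul_mul_assoc, mul_smul_comm]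
  congr 1
  rw [Finset.sum_mul, Finset.mul_sum]
  calc ∑ s : ZMod d, t 1 ^ s.val * t 2 ^ (-s).val * g 1
      = ∑ s : ZMod d, g 1 * (t 2 ^ s.val * t 1 ^ (-s).val) := by
        refine Finset.sum_congr rfl fun s _ => ?_
        rw [mul_assoc, t2g1 rel_tg, ← mul_assoc, t1g1 rel_tg, mul_assoc]
    _ = ∑ s : ZMod d, g 1 * (t 1 ^ s.val * t 2 ^ (-s).val) := by
        refine Fintype.sum_equiv (Equiv.neg (ZMod d)) _ _ fun s => ?_
        simp only [Equiv.neg_apply, neg_neg]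
        rw [(comm_tt rel_tt 2 1 s.val (-s).val).eq]

theorem e1_b (rel_tb : ∀ i : ℕ, t i * b₁ = b₁ * t i)
    (he : ∀ i : ℕ, 1 ≤ i →
      e i = (d : K)⁻¹ • ∑ s : ZMod d, t i ^ s.val * t (i + 1) ^ (-s).val) :
    e 1 * b₁ = b₁ * e 1 := by
  rw [he1' he, smul_mul_assoc, mul_smul_comm]
  congr 1
  rw [Finset.sum_mul, Finset.mul_sum]
  refine Finset.sum_congr rfl fun s _ => ?_
  rw [mul_assoc, (comm_tb rel_tb 2 (-s).val).eq, ← mul_assoc,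
    (comm_tb rel_tb 1 s.val).eq, mul_assoc]

theorem pow_val_mul_single (rel_td : ∀ i : ℕ, t i ^ d = 1) (i : ℕ) (c : ZMod d) :
    t i ^ c.val * t i = t i ^ (c + (1 : ZMod d)).val := by
  have h1 : t i ^ c.val * t i = t i ^ (c.val + 1) := by rw [pow_succ]
  rw [h1, pow_mod rel_td i (c.val + 1)]
  congr 1
  rw [ZMod.val_add, ZMod.val_one_eq_one_mod, Nat.add_mod_mod]

theorem t1_e1 (rel_tt : ∀ i j : ℕ, t i * t j = t j * t i)
    (rel_td : ∀ i : ℕ, t i ^ d = 1)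
    (he : ∀ i : ℕ, 1 ≤ i →
      e i = (d : K)⁻¹ • ∑ s : ZMod d, t i ^ s.val * t (i + 1) ^ (-s).val) :
    t 1 * e 1 = e 1 * t 2 := by
  rw [he1' he, mul_smul_comm, smul_mul_assoc]
  congr 1
  rw [Finset.mul_sum, Finset.sum_mul]
  calc ∑ s : ZMod d, t 1 * (t 1 ^ s.val * t 2 ^ (-s).val)
      = ∑ s : ZMod d, t 1 ^ ((1 : ZMod d) + s).val * t 2 ^ (-s).val := by
        refine Finset.sum_congr rfl fun s _ => ?_
        rw [← mul_assoc, mul_pow_val rel_td]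
    _ = ∑ s : ZMod d, t 1 ^ s.val * t 2 ^ (-s).val * t 2 := by
        refine Fintype.sum_equiv (Equiv.addLeft (1 : ZMod d)) _ _ fun s => ?_
        simp only [Equiv.coe_addLeft]
        rw [mul_assoc, pow_val_mul_single rel_td 2, show -((1 : ZMod d) + s) + 1 = -s by ring]

theorem tf (hf : f₁ = (d : K)⁻¹ • ∑ s : ZMod d, t 1 ^ s.val)
    (rel_td : ∀ i : ℕ, t i ^ d = 1) (a : ZMod d) :
    t 1 ^ a.val * f₁ = (d : K)⁻¹ • ∑ k : ZMod d, t 1 ^ (a + k).val := by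
  rw [hf, mul_smul_comm, Finset.mul_sum]
  exact congrArg _ (Finset.sum_congr rfl fun k _ => pow_val_mul rel_td 1 a k)

theorem eabs (rel_tt : ∀ i j : ℕ, t i * t j = t j * t i)
    (rel_td : ∀ i : ℕ, t i ^ d = 1)
    (he : ∀ i : ℕ, 1 ≤ i →
      e i = (d : K)⁻¹ • ∑ s : ZMod d, t i ^ s.val * t (i + 1) ^ (-s).val)
    (p q : ZMod d) :
    t 1 ^ p.val * t 2 ^ q.val * e 1
      = (d : K)⁻¹ • ∑ j : ZMod d, t 1 ^ (p + j).val * t 2 ^ (q - j).val := by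
  rw [he1' he, mul_smul_comm, Finset.mul_sum]
  congr 1
  refine Finset.sum_congr rfl fun j _ => ?_
  rw [mul_assoc (t 1 ^ p.val), ← mul_assoc (t 2 ^ q.val),
    (comm_tt rel_tt 2 1 q.val j.val).eq, mul_assoc (t 1 ^ j.val),
    ← mul_assoc (t 1 ^ p.val), pow_val_mul rel_td, pow_val_mul rel_td, ← sub_eq_add_neg]

end Stmt15
end Stmt15Aux

section Stmt15Aux
variable {K : Type*} [Field K] [CharZero K] {H : Type*} [Ring H] [Algebra K H]
    {u v z : K} {d : ℕ} [NeZero d]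
    {x y : ZMod d → K}
    {b₁ : H} {t g b : ℕ → H} {e : ℕ → H} {f₁ : H}
namespace Stmt15

/-- the inverse of `g 1` -/
def gi (u : K) (g e : ℕ → H) : H := g 1 - (u - u⁻¹) • e 1

theorem g1_gi (rel_tt : ∀ i j : ℕ, t i * t j = t j * t i)
    (rel_tg : ∀ i j : ℕ, 1 ≤ i → t j * g i = g i * t (Equiv.swap i (i + 1) j))
    (rel_gsq : ∀ i : ℕ, 1 ≤ i → g i * g i = 1 + (u - u⁻¹) • (e i * g i))
    (he : ∀ i : ℕ, 1 ≤ i →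
      e i = (d : K)⁻¹ • ∑ s : ZMod d, t i ^ s.val * t (i + 1) ^ (-s).val) :
    g 1 * gi u g e = 1 := by
  unfold gi
  rw [mul_sub, mul_smul_comm, ← e1_g1 rel_tt rel_tg he, rel_gsq 1 le_rfl,
    add_sub_cancel_right]

theorem gi_g1 (rel_gsq : ∀ i : ℕ, 1 ≤ i → g i * g i = 1 + (u - u⁻¹) • (e i * g i)) :
    gi u g e * g 1 = 1 := by
  unfold gi
  rw [sub_mul, smul_mul_assoc, rel_gsq 1 le_rfl, add_sub_cancel_right]

theorem b2_eq (hb1 : b 1 = b₁) (hbrec : ∀ k : ℕ, 1 ≤ k → b (k + 1) * g k = g k * b k)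
    (rel_tt : ∀ i j : ℕ, t i * t j = t j * t i)
    (rel_tg : ∀ i j : ℕ, 1 ≤ i → t j * g i = g i * t (Equiv.swap i (i + 1) j))
    (rel_gsq : ∀ i : ℕ, 1 ≤ i → g i * g i = 1 + (u - u⁻¹) • (e i * g i))
    (he : ∀ i : ℕ, 1 ≤ i →
      e i = (d : K)⁻¹ • ∑ s : ZMod d, t i ^ s.val * t (i + 1) ^ (-s).val) :
    b 2 = g 1 * b₁ * gi u g e := by
  have h := hbrec 1 le_rfl
  rw [hb1] at h
  calc b 2 = b 2 * (g 1 * gi u g e) := by rw [g1_gi rel_tt rel_tg rel_gsq he, mul_one]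
    _ = (b 2 * g 1) * gi u g e := by rw [mul_assoc]
    _ = g 1 * b₁ * gi u g e := by rw [h]

theorem mem_b (n : ℕ) : b₁ ∈ frameBSub K b₁ t g n :=
  Algebra.subset_adjoin (Set.mem_union_left _ (Set.mem_union_left _ rfl))

theorem mem_t {i n : ℕ} (h1 : 1 ≤ i) (h2 : i ≤ n) : t i ∈ frameBSub K b₁ t g n :=
  Algebra.subset_adjoin (Set.mem_union_left _ (Set.mem_union_right _ ⟨i, ⟨h1, h2⟩, rfl⟩))

theorem mem_g {i n : ℕ} (h1 : 1 ≤ i) (h2 : i ≤ n - 1) : g i ∈ frameBSub K b₁ t g n :=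
  Algebra.subset_adjoin (Set.mem_union_right _ ⟨i, ⟨h1, h2⟩, rfl⟩)

end Stmt15
end Stmt15Aux

section Stmt15Aux
variable {K : Type*} [Field K] [CharZero K] {H : Type*} [Ring H] [Algebra K H]
    {u v z : K} {d : ℕ} [NeZero d]
    {x y : ZMod d → K}
    {b₁ : H} {t g b : ℕ → H} {e : ℕ → H} {f₁ : H} {Tr : H →ₗ[K] K}
namespace Stmt15

structure Hyps (u v z : K) (d : ℕ) [NeZero d] (x y : ZMod d → K)
    (b₁ : H) (t g b : ℕ → H) (e : ℕ → H) (f₁ : H) (Tr : H →ₗ[K] K) : Prop where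
  he : ∀ i : ℕ, 1 ≤ i → e i = (d : K)⁻¹ • ∑ s : ZMod d, t i ^ s.val * t (i + 1) ^ (-s).val
  hf : f₁ = (d : K)⁻¹ • ∑ s : ZMod d, t 1 ^ s.val
  rel_bgbg : b₁ * g 1 * b₁ * g 1 = g 1 * b₁ * g 1 * b₁
  rel_tt : ∀ i j : ℕ, t i * t j = t j * t i
  rel_tg : ∀ i j : ℕ, 1 ≤ i → t j * g i = g i * t (Equiv.swap i (i + 1) j)
  rel_tb : ∀ i : ℕ, t i * b₁ = b₁ * t i
  rel_td : ∀ i : ℕ, t i ^ d = 1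
  rel_gsq : ∀ i : ℕ, 1 ≤ i → g i * g i = 1 + (u - u⁻¹) • (e i * g i)
  rel_bsq : b₁ * b₁ = 1 + (v - v⁻¹) • (f₁ * b₁)
  hb1 : b 1 = b₁
  hbrec : ∀ k : ℕ, 1 ≤ k → b (k + 1) * g k = g k * b k
  tr_one : Tr 1 = 1
  tr_g : ∀ m : ℕ, 1 ≤ m → ∀ X ∈ frameBSub K b₁ t g m, Tr (X * g m) = z * Tr X
  tr_bt : ∀ m : ℕ, 1 ≤ m → ∀ k : ZMod d, ∀ X ∈ frameBSub K b₁ t g m,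
      Tr (X * (b (m + 1) * t (m + 1) ^ k.val)) = y k * Tr X
  tr_t : ∀ m : ℕ, 1 ≤ m → ∀ k : ZMod d, ∀ X ∈ frameBSub K b₁ t g m,
      Tr (X * t (m + 1) ^ k.val) = x k * Tr X
  tr_comm : ∀ X Y : H, Tr (X * Y) = Tr (Y * X)

variable (S : Hyps u v z d x y b₁ t g b e f₁ Tr)
include S

theorem tr_conj (X : H) : Tr (g 1 * X * gi u g e) = Tr X := by
  rw [S.tr_comm, ← mul_assoc, gi_g1 S.rel_gsq, one_mul]

theorem trt2 (a : ZMod d) : Tr (t 2 ^ a.val) = x a := by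
  have h := S.tr_t 1 le_rfl a 1 (Subalgebra.one_mem _)
  simpa [S.tr_one] using h

theorem trt1 (a : ZMod d) : Tr (t 1 ^ a.val) = x a := by
  have h : g 1 * t 2 ^ a.val * gi u g e = t 1 ^ a.val := by
    rw [← t1g1 S.rel_tg a.val, mul_assoc, g1_gi S.rel_tt S.rel_tg S.rel_gsq S.he, mul_one]
  rw [← h, tr_conj S, trt2 S]

theorem trb2t2 (a : ZMod d) : Tr (b 2 * t 2 ^ a.val) = y a := by
  have h := S.tr_bt 1 le_rfl a 1 (Subalgebra.one_mem _)
  simpa [S.tr_one] using h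

theorem trt1b (a : ZMod d) : Tr (t 1 ^ a.val * b₁) = y a := by
  have h : g 1 * (t 1 ^ a.val * b₁) * gi u g e = t 2 ^ a.val * b 2 := by
    rw [← mul_assoc, ← t2g1 S.rel_tg a.val, mul_assoc (t 2 ^ a.val), mul_assoc (t 2 ^ a.val),
      ← b2_eq S.hb1 S.hbrec S.rel_tt S.rel_tg S.rel_gsq S.he]
  rw [← tr_conj S (t 1 ^ a.val * b₁), h, S.tr_comm, trb2t2 S]

theorem trt1g (a : ZMod d) : Tr (t 1 ^ a.val * g 1) = z * x a := by
  rw [S.tr_g 1 le_rfl _ (Subalgebra.pow_mem _ (mem_t le_rfl le_rfl) _), trt1 S]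

theorem trt1bg (a : ZMod d) : Tr (t 1 ^ a.val * b₁ * g 1) = z * y a := by
  rw [S.tr_g 1 le_rfl _ (Subalgebra.mul_mem _
    (Subalgebra.pow_mem _ (mem_t le_rfl le_rfl) _) (mem_b 1)), trt1b S]

end Stmt15
end Stmt15Aux

section Stmt15Aux
variable {K : Type*} [Field K] [CharZero K] {H : Type*} [Ring H] [Algebra K H]
    {u v z : K} {d : ℕ} [NeZero d]
    {x y : ZMod d → K}
    {b₁ : H} {t g b : ℕ → H} {e : ℕ → H} {f₁ : H} {Tr : H →ₗ[K] K}
namespace Stmt15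
variable (S : Hyps u v z d x y b₁ t g b e f₁ Tr)
include S

/-- value of `Tr(t₁^a b₁ g₁ b₁)` -/
theorem trD (a : ZMod d) :
    Tr (t 1 ^ a.val * b₁ * g 1 * b₁)
      = z * x a + (v - v⁻¹) * (z * ((d : K)⁻¹ * ∑ k : ZMod d, y k)) := by
  have h1 : b₁ * (t 1 ^ a.val * b₁ * g 1) = t 1 ^ a.val * (b₁ * b₁) * g 1 := by
    rw [← mul_assoc b₁, ← mul_assoc b₁, ← (comm_tb S.rel_tb 1 a.val).eq,
      mul_assoc (t 1 ^ a.val) b₁ b₁]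
  rw [S.tr_comm, h1, S.rel_bsq, mul_add, mul_one, add_mul, map_add, mul_smul_comm,
    smul_mul_assoc, map_smul, smul_eq_mul, trt1g S a]
  congr 1
  have h2 : t 1 ^ a.val * (f₁ * b₁) * g 1
      = ((d : K)⁻¹ • ∑ k : ZMod d, t 1 ^ (a + k).val) * b₁ * g 1 := by
    rw [← mul_assoc (t 1 ^ a.val) f₁ b₁, tf S.hf S.rel_td a]
  rw [h2, smul_mul_assoc, smul_mul_assoc, map_smul, smul_eq_mul,
    Finset.sum_mul, Finset.sum_mul, map_sum]
  have h3 : ∀ k ∈ (Finset.univ : Finset (ZMod d)),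
      Tr (t 1 ^ (a + k).val * b₁ * g 1) = z * y (a + k) := fun k _ => trt1bg S (a + k)
  rw [Finset.sum_congr rfl h3, ← Finset.mul_sum,
    show ∑ k : ZMod d, y (a + k) = ∑ k : ZMod d, y k from
      Fintype.sum_equiv (Equiv.addLeft a) _ _ fun _ => rfl]
  ring

end Stmt15
end Stmt15Aux

section Stmt15Aux
variable {K : Type*} [Field K] [CharZero K] {H : Type*} [Ring H] [Algebra K H]
    {u v z : K} {d : ℕ} [NeZero d]
    {x y : ZMod d → K}
    {b₁ : H} {t g b : ℕ → H} {e : ℕ → H} {f₁ : H} {Tr : H →ₗ[K] K}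
namespace Stmt15
variable (S : Hyps u v z d x y b₁ t g b e f₁ Tr)
include S

theorem t1_gi : t 1 * gi u g e = gi u g e * t 2 := by
  unfold gi
  rw [mul_sub, sub_mul, mul_smul_comm, smul_mul_assoc, t1_e1 S.rel_tt S.rel_td S.he,
    show t 1 * g 1 = g 1 * t 2 from by simpa using S.rel_tg 1 1 le_rfl]

theorem t2_b2 : t 2 * b 2 = b 2 * t 2 := by
  rw [b2_eq S.hb1 S.hbrec S.rel_tt S.rel_tg S.rel_gsq S.he, ← mul_assoc, ← mul_assoc,
    show t 2 * g 1 = g 1 * t 1 from by simpa using S.rel_tg 1 2 le_rfl,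
    mul_assoc (g 1), S.rel_tb 1, ← mul_assoc (g 1), mul_assoc (g 1 * b₁), t1_gi S,
    ← mul_assoc]

theorem e1_gi : e 1 * gi u g e = gi u g e * e 1 := by
  unfold gi
  rw [mul_sub, sub_mul, e1_g1 S.rel_tt S.rel_tg S.he, mul_smul_comm, smul_mul_assoc]

theorem e1_b2 : e 1 * b 2 = b 2 * e 1 := by
  rw [b2_eq S.hb1 S.hbrec S.rel_tt S.rel_tg S.rel_gsq S.he, ← mul_assoc, ← mul_assoc,
    e1_g1 S.rel_tt S.rel_tg S.he, mul_assoc (g 1), e1_b S.rel_tb S.he,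
    ← mul_assoc (g 1), mul_assoc (g 1 * b₁), e1_gi S, ← mul_assoc]

theorem trD2 (a c : ZMod d) :
    Tr (t 1 ^ a.val * t 2 ^ c.val * b₁ * g 1 * b₁)
      = z * x (a + c) + (v - v⁻¹) * (z * ((d : K)⁻¹ * ∑ k : ZMod d, y k)) := by
  have h : t 1 ^ a.val * t 2 ^ c.val * b₁ * g 1 * b₁
      = t 1 ^ a.val * b₁ * g 1 * b₁ * t 1 ^ c.val := by
    rw [mul_assoc (t 1 ^ a.val) (t 2 ^ c.val) b₁, (comm_tb S.rel_tb 2 c.val).eq,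
      ← mul_assoc (t 1 ^ a.val) b₁, mul_assoc (t 1 ^ a.val * b₁), t2g1 S.rel_tg c.val,
      ← mul_assoc (t 1 ^ a.val * b₁) (g 1), mul_assoc (t 1 ^ a.val * b₁ * g 1),
      (comm_tb S.rel_tb 1 c.val).eq, ← mul_assoc]
  rw [h, S.tr_comm, ← mul_assoc (t 1 ^ c.val), ← mul_assoc (t 1 ^ c.val),
    ← mul_assoc (t 1 ^ c.val), pow_val_mul S.rel_td 1 c a, trD S (c + a), add_comm c a]

theorem trbb (p q : ZMod d) :
    Tr (t 1 ^ p.val * t 2 ^ q.val * b₁ * b 2) = y p * y q := by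
  have h : t 1 ^ p.val * t 2 ^ q.val * b₁ * b 2
      = (t 1 ^ p.val * b₁) * (b 2 * t 2 ^ q.val) := by
    rw [mul_assoc (t 1 ^ p.val) (t 2 ^ q.val) b₁, (comm_tb S.rel_tb 2 q.val).eq,
      ← mul_assoc (t 1 ^ p.val) b₁, mul_assoc (t 1 ^ p.val * b₁),
      ((show Commute (t 2) (b 2) from t2_b2 S).pow_left q.val).eq]
  have hmem : t 1 ^ p.val * b₁ ∈ frameBSub K b₁ t g 1 :=
    Subalgebra.mul_mem _ (Subalgebra.pow_mem _ (mem_t le_rfl le_rfl) _) (mem_b 1)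
  have h2 := S.tr_bt 1 le_rfl q _ hmem
  norm_num at h2
  rw [h, h2, trt1b S, mul_comm]

theorem b2g1 : b 2 * g 1 = g 1 * b₁ := by
  have h := S.hbrec 1 le_rfl
  rw [S.hb1] at h
  norm_num at h
  exact h

theorem key1 : b₁ * g 1 * b₁ * g 1
    = b₁ * b 2 + (u - u⁻¹) • (e 1 * (b₁ * g 1 * b₁)) := by
  have hcomm : b₁ * b 2 * (e 1 * g 1) = e 1 * (b₁ * g 1 * b₁) := by
    rw [← mul_assoc (b₁ * b 2), mul_assoc b₁ (b 2) (e 1), ← e1_b2 S, ← mul_assoc b₁ (e 1),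
      ← e1_b S.rel_tb S.he, mul_assoc (e 1 * b₁), b2g1 S]
    simp only [mul_assoc]
  calc b₁ * g 1 * b₁ * g 1 = b₁ * (g 1 * b₁) * g 1 := by rw [mul_assoc b₁ (g 1) b₁]
    _ = b₁ * (b 2 * g 1) * g 1 := by rw [← b2g1 S]
    _ = b₁ * b 2 * (g 1 * g 1) := by rw [← mul_assoc b₁ (b 2), mul_assoc (b₁ * b 2)]
    _ = b₁ * b 2 + (u - u⁻¹) • (b₁ * b 2 * (e 1 * g 1)) := by
        rw [S.rel_gsq 1 le_rfl, mul_add, mul_one, mul_smul_comm]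
    _ = b₁ * b 2 + (u - u⁻¹) • (e 1 * (b₁ * g 1 * b₁)) := by rw [hcomm]

theorem key2 : b₁ * g 1 * b₁ * g 1 * g 1
    = b₁ * g 1 * b₁ + (u - u⁻¹) • (e 1 * (b₁ * g 1 * b₁ * g 1)) := by
  calc b₁ * g 1 * b₁ * g 1 * g 1
      = (b₁ * b 2 + (u - u⁻¹) • (e 1 * (b₁ * g 1 * b₁))) * g 1 := by rw [key1 S]
    _ = b₁ * b 2 * g 1 + (u - u⁻¹) • (e 1 * (b₁ * g 1 * b₁) * g 1) := by
        rw [add_mul, smul_mul_assoc]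
    _ = b₁ * g 1 * b₁ + (u - u⁻¹) • (e 1 * (b₁ * g 1 * b₁ * g 1)) := by
        rw [mul_assoc b₁ (b 2), b2g1 S, ← mul_assoc b₁, mul_assoc (e 1)]

end Stmt15
end Stmt15Aux

section Stmt15Aux
variable {K : Type*} [Field K] [CharZero K] {H : Type*} [Ring H] [Algebra K H]
    {u v z : K} {d : ℕ} [NeZero d]
    {x y : ZMod d → K}
    {b₁ : H} {t g b : ℕ → H} {e : ℕ → H} {f₁ : H} {Tr : H →ₗ[K] K}
namespace Stmt15

theorem memD2 (p q : ZMod d) :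
    t 1 ^ p.val * t 2 ^ q.val * b₁ * g 1 * b₁ ∈ frameBSub K b₁ t g 2 := by
  refine Subalgebra.mul_mem _ (Subalgebra.mul_mem _ (Subalgebra.mul_mem _
    (Subalgebra.mul_mem _ ?_ ?_) ?_) ?_) ?_
  · exact Subalgebra.pow_mem _ (mem_t le_rfl one_le_two) _
  · exact Subalgebra.pow_mem _ (mem_t one_le_two le_rfl) _
  · exact mem_b 2
  · exact mem_g le_rfl (by norm_num)
  · exact mem_b 2

theorem memG2 (p q : ZMod d) :
    t 1 ^ p.val * t 2 ^ q.val * b₁ * g 1 * b₁ * g 1 ∈ frameBSub K b₁ t g 2 :=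
  Subalgebra.mul_mem _ (memD2 p q) (mem_g le_rfl (by norm_num))

variable (S : Hyps u v z d x y b₁ t g b e f₁ Tr)
include S

theorem trED (p q : ZMod d) :
    Tr (t 1 ^ p.val * t 2 ^ q.val * (e 1 * (b₁ * g 1 * b₁)))
      = z * x (p + q) + (v - v⁻¹) * (z * ((d : K)⁻¹ * ∑ k : ZMod d, y k)) := by
  have hd : (d : K) ≠ 0 := Nat.cast_ne_zero.mpr (NeZero.ne d)
  have h : t 1 ^ p.val * t 2 ^ q.val * (e 1 * (b₁ * g 1 * b₁))
      = (t 1 ^ p.val * t 2 ^ q.val * e 1) * (b₁ * g 1 * b₁) := by simp only [mul_assoc]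
  rw [h, eabs S.rel_tt S.rel_td S.he p q, smul_mul_assoc, map_smul, smul_eq_mul,
    Finset.sum_mul, map_sum]
  have h3 : ∀ j ∈ (Finset.univ : Finset (ZMod d)),
      Tr ((t 1 ^ (p + j).val * t 2 ^ (q - j).val) * (b₁ * g 1 * b₁))
        = z * x (p + q) + (v - v⁻¹) * (z * ((d : K)⁻¹ * ∑ k : ZMod d, y k)) := by
    intro j _
    have ha : (t 1 ^ (p + j).val * t 2 ^ (q - j).val) * (b₁ * g 1 * b₁)
        = t 1 ^ (p + j).val * t 2 ^ (q - j).val * b₁ * g 1 * b₁ := by simp only [mul_assoc]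
    rw [ha, trD2 S (p + j) (q - j), show p + j + (q - j) = p + q by ring]
  rw [Finset.sum_congr rfl h3, Finset.sum_const, Finset.card_univ, ZMod.card, nsmul_eq_mul,
    ← mul_assoc, inv_mul_cancel₀ hd, one_mul]

theorem trG (p q : ZMod d) :
    Tr (t 1 ^ p.val * t 2 ^ q.val * b₁ * g 1 * b₁ * g 1)
      = y p * y q + (u - u⁻¹) * (z * x (p + q)
          + (v - v⁻¹) * (z * ((d : K)⁻¹ * ∑ k : ZMod d, y k))) := by
  have h : t 1 ^ p.val * t 2 ^ q.val * b₁ * g 1 * b₁ * g 1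
      = t 1 ^ p.val * t 2 ^ q.val * (b₁ * g 1 * b₁ * g 1) := by simp only [mul_assoc]
  rw [h, key1 S, mul_add, mul_smul_comm, map_add, map_smul, smul_eq_mul]
  rw [show t 1 ^ p.val * t 2 ^ q.val * (b₁ * b 2) = t 1 ^ p.val * t 2 ^ q.val * b₁ * b 2
    from by simp only [mul_assoc]]
  rw [trbb S p q, trED S p q]

theorem trDG (p q : ZMod d) :
    Tr (t 1 ^ p.val * t 2 ^ q.val * b₁ * g 1 * b₁ * g 2)
      = z * (z * x (p + q) + (v - v⁻¹) * (z * ((d : K)⁻¹ * ∑ k : ZMod d, y k))) := by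
  rw [S.tr_g 2 one_le_two _ (memD2 p q), trD2 S p q]

theorem trGG (p q : ZMod d) :
    Tr (t 1 ^ p.val * t 2 ^ q.val * b₁ * g 1 * b₁ * g 1 * g 2)
      = z * (y p * y q + (u - u⁻¹) * (z * x (p + q)
          + (v - v⁻¹) * (z * ((d : K)⁻¹ * ∑ k : ZMod d, y k)))) := by
  rw [S.tr_g 2 one_le_two _ (memG2 p q), trG S p q]

theorem trEG (p q : ZMod d) :
    Tr (t 1 ^ p.val * t 2 ^ q.val * (e 1 * (b₁ * g 1 * b₁ * g 1 * g 2)))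
      = z * ((d : K)⁻¹ * ∑ j : ZMod d, y (p + j) * y (q - j))
        + (u - u⁻¹) * (z * (z * x (p + q)
          + (v - v⁻¹) * (z * ((d : K)⁻¹ * ∑ k : ZMod d, y k)))) := by
  have hd : (d : K) ≠ 0 := Nat.cast_ne_zero.mpr (NeZero.ne d)
  have h : t 1 ^ p.val * t 2 ^ q.val * (e 1 * (b₁ * g 1 * b₁ * g 1 * g 2))
      = (t 1 ^ p.val * t 2 ^ q.val * e 1) * (b₁ * g 1 * b₁ * g 1 * g 2) := by
    simp only [mul_assoc]
  rw [h, eabs S.rel_tt S.rel_td S.he p q, smul_mul_assoc, map_smul, smul_eq_mul,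
    Finset.sum_mul, map_sum]
  have h3 : ∀ j ∈ (Finset.univ : Finset (ZMod d)),
      Tr ((t 1 ^ (p + j).val * t 2 ^ (q - j).val) * (b₁ * g 1 * b₁ * g 1 * g 2))
        = z * (y (p + j) * y (q - j)) + (u - u⁻¹) * (z * (z * x (p + q)
          + (v - v⁻¹) * (z * ((d : K)⁻¹ * ∑ k : ZMod d, y k)))) := by
    intro j _
    have ha : (t 1 ^ (p + j).val * t 2 ^ (q - j).val) * (b₁ * g 1 * b₁ * g 1 * g 2)
        = t 1 ^ (p + j).val * t 2 ^ (q - j).val * b₁ * g 1 * b₁ * g 1 * g 2 := by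
      simp only [mul_assoc]
    rw [ha, trGG S (p + j) (q - j), show p + j + (q - j) = p + q by ring]
    ring
  rw [Finset.sum_congr rfl h3, Finset.sum_add_distrib, Finset.sum_const, Finset.card_univ,
    ZMod.card, nsmul_eq_mul, mul_add, ← Finset.mul_sum, ← mul_assoc ((d : K)⁻¹) ((d : K)),
    inv_mul_cancel₀ hd, one_mul]
  ring

end Stmt15
end Stmt15Aux

section Stmt15Aux
variable {K : Type*} [Field K] [CharZero K] {H : Type*} [Ring H] [Algebra K H]
    {u v z : K} {d : ℕ} [NeZero d]
    {x y : ZMod d → K}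
    {b₁ : H} {t g b : ℕ → H} {e : ℕ → H} {f₁ : H} {Tr : H →ₗ[K] K}
namespace Stmt15
variable (S : Hyps u v z d x y b₁ t g b e f₁ Tr)
include S

theorem mvb (n : ℕ) (R : H) : t 3 ^ n * (b₁ * R) = b₁ * (t 3 ^ n * R) := by
  rw [← mul_assoc, (comm_tb S.rel_tb 3 n).eq, mul_assoc]

theorem mvg1 (n : ℕ) (R : H) : t 3 ^ n * (g 1 * R) = g 1 * (t 3 ^ n * R) := by
  rw [← mul_assoc, t3g1 S.rel_tg n, mul_assoc]

theorem mvg2 (n : ℕ) (R : H) : t 3 ^ n * (g 2 * R) = g 2 * (t 2 ^ n * R) := by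
  rw [← mul_assoc, t3g2 S.rel_tg n, mul_assoc]

theorem mv2g1 (n : ℕ) (R : H) : t 2 ^ n * (g 1 * R) = g 1 * (t 1 ^ n * R) := by
  rw [← mul_assoc, t2g1 S.rel_tg n, mul_assoc]

theorem sub1 (c : ZMod d) :
    t 3 ^ c.val * (b₁ * (g 1 * b₁)) = b₁ * (g 1 * (b₁ * t 3 ^ c.val)) := by
  rw [mvb S, mvg1 S, (comm_tb S.rel_tb 3 c.val).eq]

theorem sub2 (c : ZMod d) :
    t 3 ^ c.val * (b₁ * (g 1 * (b₁ * g 1)))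
      = b₁ * (g 1 * (b₁ * (g 1 * t 3 ^ c.val))) := by
  rw [mvb S, mvg1 S, mvb S, ← t3g1 S.rel_tg c.val]

theorem sub3 (c : ZMod d) :
    t 3 ^ c.val * (b₁ * (g 1 * (b₁ * g 2)))
      = b₁ * (g 1 * (b₁ * (g 2 * t 2 ^ c.val))) := by
  rw [mvb S, mvg1 S, mvb S, ← t3g2 S.rel_tg c.val]

theorem sub4 (c : ZMod d) :
    t 3 ^ c.val * (b₁ * (g 1 * (b₁ * (g 1 * g 2))))
      = b₁ * (g 1 * (b₁ * (g 1 * (g 2 * t 2 ^ c.val)))) := by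
  rw [mvb S, mvg1 S, mvb S, mvg1 S, ← t3g2 S.rel_tg c.val]

theorem sub5 (c : ZMod d) :
    t 3 ^ c.val * (b₁ * (g 1 * (b₁ * (g 2 * g 1))))
      = b₁ * (g 1 * (b₁ * (g 2 * (g 1 * t 1 ^ c.val)))) := by
  rw [mvb S, mvg1 S, mvb S, mvg2 S, ← t2g1 S.rel_tg c.val]

theorem sub6 (c : ZMod d) :
    t 3 ^ c.val * (b₁ * (g 1 * (b₁ * (g 1 * (g 2 * g 1)))))
      = b₁ * (g 1 * (b₁ * (g 1 * (g 2 * (g 1 * t 1 ^ c.val))))) := by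
  rw [mvb S, mvg1 S, mvb S, mvg1 S, mvg2 S, ← t2g1 S.rel_tg c.val]

theorem t2merge (a q c : ZMod d) (R : H) :
    t 2 ^ c.val * (t 1 ^ a.val * (t 2 ^ q.val * R))
      = t 1 ^ a.val * (t 2 ^ (q + c).val * R) := by
  rw [← mul_assoc, (comm_tt S.rel_tt 2 1 c.val a.val).eq, mul_assoc,
    ← mul_assoc (t 2 ^ c.val), pow_val_mul S.rel_td 2 c q, add_comm c q]

theorem t1merge (a c : ZMod d) (R : H) :
    t 1 ^ c.val * (t 1 ^ a.val * R) = t 1 ^ (a + c).val * R := by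
  rw [← mul_assoc, pow_val_mul S.rel_td 1 c a, add_comm c a]

theorem t21swap (p q : ZMod d) (R : H) :
    t 2 ^ p.val * (t 1 ^ q.val * R) = t 1 ^ q.val * (t 2 ^ p.val * R) := by
  rw [← mul_assoc, (comm_tt S.rel_tt 2 1 p.val q.val).eq, mul_assoc]

theorem gpush (p q : ZMod d) (R : H) :
    g 1 * (t 1 ^ p.val * (t 2 ^ q.val * R))
      = t 2 ^ p.val * (t 1 ^ q.val * (g 1 * R)) := by
  rw [← mul_assoc, ← t2g1 S.rel_tg p.val, mul_assoc, ← mul_assoc (g 1),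
    ← t1g1 S.rel_tg q.val, mul_assoc]

theorem bgbgpush (R : H) : g 1 * (b₁ * (g 1 * (b₁ * R)))
    = b₁ * (g 1 * (b₁ * (g 1 * R))) := by
  have h1 : g 1 * (b₁ * (g 1 * (b₁ * R))) = (g 1 * b₁ * g 1 * b₁) * R := by
    simp only [mul_assoc]
  rw [h1, ← S.rel_bgbg]
  simp only [mul_assoc]

end Stmt15
end Stmt15Aux

section Stmt15Aux
variable {K : Type*} [Field K] [CharZero K] {H : Type*} [Ring H] [Algebra K H]
    {u v z : K} {d : ℕ} [NeZero d]
    {x y : ZMod d → K}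
    {b₁ : H} {t g b : ℕ → H} {e : ℕ → H} {f₁ : H} {Tr : H →ₗ[K] K}
namespace Stmt15
variable (S : Hyps u v z d x y b₁ t g b e f₁ Tr)
include S

theorem P1 (a c cc : ZMod d) :
    Tr (t 1 ^ a.val * t 2 ^ c.val * t 3 ^ cc.val * (b₁ * (g 1 * b₁)))
      = x cc * (z * x (a + c)
          + (v - v⁻¹) * (z * ((d : K)⁻¹ * ∑ k : ZMod d, y k))) := by
  have h : t 1 ^ a.val * t 2 ^ c.val * t 3 ^ cc.val * (b₁ * (g 1 * b₁))
      = (t 1 ^ a.val * t 2 ^ c.val * b₁ * g 1 * b₁) * t 3 ^ cc.val := by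
    have h0 : t 1 ^ a.val * t 2 ^ c.val * t 3 ^ cc.val * (b₁ * (g 1 * b₁))
        = t 1 ^ a.val * (t 2 ^ c.val * (t 3 ^ cc.val * (b₁ * (g 1 * b₁)))) := by
      simp only [mul_assoc]
    rw [h0, sub1 S cc]
    simp only [mul_assoc]
  have h2 := S.tr_t 2 one_le_two cc _ (memD2 a c)
  norm_num at h2
  rw [h, h2, trD2 S a c]

theorem P2 (a c cc : ZMod d) :
    Tr (t 1 ^ a.val * t 2 ^ c.val * t 3 ^ cc.val * (b₁ * (g 1 * (b₁ * g 1))))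
      = x cc * (y a * y c + (u - u⁻¹) * (z * x (a + c)
          + (v - v⁻¹) * (z * ((d : K)⁻¹ * ∑ k : ZMod d, y k)))) := by
  have h : t 1 ^ a.val * t 2 ^ c.val * t 3 ^ cc.val * (b₁ * (g 1 * (b₁ * g 1)))
      = (t 1 ^ a.val * t 2 ^ c.val * b₁ * g 1 * b₁ * g 1) * t 3 ^ cc.val := by
    have h0 : t 1 ^ a.val * t 2 ^ c.val * t 3 ^ cc.val * (b₁ * (g 1 * (b₁ * g 1)))
        = t 1 ^ a.val * (t 2 ^ c.val * (t 3 ^ cc.val * (b₁ * (g 1 * (b₁ * g 1))))) := by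
      simp only [mul_assoc]
    rw [h0, sub2 S cc]
    simp only [mul_assoc]
  have h2 := S.tr_t 2 one_le_two cc _ (memG2 a c)
  norm_num at h2
  rw [h, h2, trG S a c]

theorem P3 (a c cc : ZMod d) :
    Tr (t 1 ^ a.val * t 2 ^ c.val * t 3 ^ cc.val * (b₁ * (g 1 * (b₁ * g 2))))
      = z * (z * x (a + c + cc)
          + (v - v⁻¹) * (z * ((d : K)⁻¹ * ∑ k : ZMod d, y k))) := by
  have h0 : t 1 ^ a.val * t 2 ^ c.val * t 3 ^ cc.val * (b₁ * (g 1 * (b₁ * g 2)))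
      = t 1 ^ a.val * (t 2 ^ c.val * (t 3 ^ cc.val * (b₁ * (g 1 * (b₁ * g 2))))) := by
    simp only [mul_assoc]
  rw [h0, sub3 S cc]
  have h1 : t 1 ^ a.val * (t 2 ^ c.val * (b₁ * (g 1 * (b₁ * (g 2 * t 2 ^ cc.val)))))
      = (t 1 ^ a.val * t 2 ^ c.val * b₁ * g 1 * b₁ * g 2) * t 2 ^ cc.val := by
    simp only [mul_assoc]
  rw [h1, S.tr_comm]
  have h2 : t 2 ^ cc.val * (t 1 ^ a.val * t 2 ^ c.val * b₁ * g 1 * b₁ * g 2)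
      = t 1 ^ a.val * t 2 ^ (c + cc).val * b₁ * g 1 * b₁ * g 2 := by
    have h3 : t 2 ^ cc.val * (t 1 ^ a.val * t 2 ^ c.val * b₁ * g 1 * b₁ * g 2)
        = t 2 ^ cc.val * (t 1 ^ a.val * (t 2 ^ c.val * (b₁ * (g 1 * (b₁ * g 2))))) := by
      simp only [mul_assoc]
    rw [h3, t2merge S a c cc]
    simp only [mul_assoc]
  rw [h2, trDG S a (c + cc), show a + (c + cc) = a + c + cc by ring]

theorem P4 (a c cc : ZMod d) :
    Tr (t 1 ^ a.val * t 2 ^ c.val * t 3 ^ cc.val * (b₁ * (g 1 * (b₁ * (g 1 * g 2)))))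
      = z * (y a * y (c + cc) + (u - u⁻¹) * (z * x (a + c + cc)
          + (v - v⁻¹) * (z * ((d : K)⁻¹ * ∑ k : ZMod d, y k)))) := by
  have h0 : t 1 ^ a.val * t 2 ^ c.val * t 3 ^ cc.val * (b₁ * (g 1 * (b₁ * (g 1 * g 2))))
      = t 1 ^ a.val * (t 2 ^ c.val * (t 3 ^ cc.val * (b₁ * (g 1 * (b₁ * (g 1 * g 2)))))) := by
    simp only [mul_assoc]
  rw [h0, sub4 S cc]
  have h1 : t 1 ^ a.val * (t 2 ^ c.val * (b₁ * (g 1 * (b₁ * (g 1 * (g 2 * t 2 ^ cc.val))))))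
      = (t 1 ^ a.val * t 2 ^ c.val * b₁ * g 1 * b₁ * g 1 * g 2) * t 2 ^ cc.val := by
    simp only [mul_assoc]
  rw [h1, S.tr_comm]
  have h2 : t 2 ^ cc.val * (t 1 ^ a.val * t 2 ^ c.val * b₁ * g 1 * b₁ * g 1 * g 2)
      = t 1 ^ a.val * t 2 ^ (c + cc).val * b₁ * g 1 * b₁ * g 1 * g 2 := by
    have h3 : t 2 ^ cc.val * (t 1 ^ a.val * t 2 ^ c.val * b₁ * g 1 * b₁ * g 1 * g 2)
        = t 2 ^ cc.val * (t 1 ^ a.val * (t 2 ^ c.val * (b₁ * (g 1 * (b₁ * (g 1 * g 2)))))) := by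
      simp only [mul_assoc]
    rw [h3, t2merge S a c cc]
    simp only [mul_assoc]
  rw [h2, trGG S a (c + cc), show a + (c + cc) = a + c + cc by ring]

theorem P5 (a c cc : ZMod d) :
    Tr (t 1 ^ a.val * t 2 ^ c.val * t 3 ^ cc.val * (b₁ * (g 1 * (b₁ * (g 2 * g 1)))))
      = z * (y c * y (a + cc) + (u - u⁻¹) * (z * x (a + c + cc)
          + (v - v⁻¹) * (z * ((d : K)⁻¹ * ∑ k : ZMod d, y k)))) := by
  have h0 : t 1 ^ a.val * t 2 ^ c.val * t 3 ^ cc.val * (b₁ * (g 1 * (b₁ * (g 2 * g 1))))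
      = t 1 ^ a.val * (t 2 ^ c.val * (t 3 ^ cc.val * (b₁ * (g 1 * (b₁ * (g 2 * g 1)))))) := by
    simp only [mul_assoc]
  rw [h0, sub5 S cc]
  have h1 : t 1 ^ a.val * (t 2 ^ c.val * (b₁ * (g 1 * (b₁ * (g 2 * (g 1 * t 1 ^ cc.val))))))
      = (t 1 ^ a.val * t 2 ^ c.val * b₁ * g 1 * b₁ * g 2 * g 1) * t 1 ^ cc.val := by
    simp only [mul_assoc]
  rw [h1, S.tr_comm]
  have h2 : t 1 ^ cc.val * (t 1 ^ a.val * t 2 ^ c.val * b₁ * g 1 * b₁ * g 2 * g 1)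
      = (t 1 ^ (a + cc).val * t 2 ^ c.val * b₁ * g 1 * b₁ * g 2) * g 1 := by
    have h3 : t 1 ^ cc.val * (t 1 ^ a.val * t 2 ^ c.val * b₁ * g 1 * b₁ * g 2 * g 1)
        = t 1 ^ cc.val * (t 1 ^ a.val * (t 2 ^ c.val * (b₁ * (g 1 * (b₁ * (g 2 * g 1)))))) := by
      simp only [mul_assoc]
    rw [h3, t1merge S a cc]
    simp only [mul_assoc]
  rw [h2, S.tr_comm]
  have h3 : g 1 * (t 1 ^ (a + cc).val * t 2 ^ c.val * b₁ * g 1 * b₁ * g 2)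
      = t 1 ^ c.val * t 2 ^ (a + cc).val * b₁ * g 1 * b₁ * g 1 * g 2 := by
    have h4 : g 1 * (t 1 ^ (a + cc).val * t 2 ^ c.val * b₁ * g 1 * b₁ * g 2)
        = g 1 * (t 1 ^ (a + cc).val * (t 2 ^ c.val * (b₁ * (g 1 * (b₁ * g 2))))) := by
      simp only [mul_assoc]
    rw [h4, gpush S (a + cc) c, bgbgpush S, t21swap S (a + cc) c]
    simp only [mul_assoc]
  rw [h3, trGG S c (a + cc), show c + (a + cc) = a + c + cc by ring]

theorem P6 (a c cc : ZMod d) :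
    Tr (t 1 ^ a.val * t 2 ^ c.val * t 3 ^ cc.val
        * (b₁ * (g 1 * (b₁ * (g 1 * (g 2 * g 1))))))
      = z * (z * x (a + c + cc)
          + (v - v⁻¹) * (z * ((d : K)⁻¹ * ∑ k : ZMod d, y k)))
        + (u - u⁻¹) * (z * ((d : K)⁻¹ * ∑ j : ZMod d, y (c + j) * y (a + cc - j))
          + (u - u⁻¹) * (z * (z * x (a + c + cc)
            + (v - v⁻¹) * (z * ((d : K)⁻¹ * ∑ k : ZMod d, y k))))) := by
  have h0 : t 1 ^ a.val * t 2 ^ c.val * t 3 ^ cc.val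
        * (b₁ * (g 1 * (b₁ * (g 1 * (g 2 * g 1)))))
      = t 1 ^ a.val * (t 2 ^ c.val * (t 3 ^ cc.val
        * (b₁ * (g 1 * (b₁ * (g 1 * (g 2 * g 1))))))) := by
    simp only [mul_assoc]
  rw [h0, sub6 S cc]
  have h1 : t 1 ^ a.val * (t 2 ^ c.val
        * (b₁ * (g 1 * (b₁ * (g 1 * (g 2 * (g 1 * t 1 ^ cc.val)))))))
      = (t 1 ^ a.val * t 2 ^ c.val * b₁ * g 1 * b₁ * g 1 * g 2 * g 1) * t 1 ^ cc.val := by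
    simp only [mul_assoc]
  rw [h1, S.tr_comm]
  have h2 : t 1 ^ cc.val * (t 1 ^ a.val * t 2 ^ c.val * b₁ * g 1 * b₁ * g 1 * g 2 * g 1)
      = (t 1 ^ (a + cc).val * t 2 ^ c.val * b₁ * g 1 * b₁ * g 1 * g 2) * g 1 := by
    have h3 : t 1 ^ cc.val * (t 1 ^ a.val * t 2 ^ c.val * b₁ * g 1 * b₁ * g 1 * g 2 * g 1)
        = t 1 ^ cc.val * (t 1 ^ a.val * (t 2 ^ c.val
            * (b₁ * (g 1 * (b₁ * (g 1 * (g 2 * g 1))))))) := by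
      simp only [mul_assoc]
    rw [h3, t1merge S a cc]
    simp only [mul_assoc]
  rw [h2, S.tr_comm]
  have h3 : g 1 * (t 1 ^ (a + cc).val * t 2 ^ c.val * b₁ * g 1 * b₁ * g 1 * g 2)
      = t 1 ^ c.val * (t 2 ^ (a + cc).val * (b₁ * (g 1 * (b₁ * (g 1 * (g 1 * g 2)))))) := by
    have h4 : g 1 * (t 1 ^ (a + cc).val * t 2 ^ c.val * b₁ * g 1 * b₁ * g 1 * g 2)
        = g 1 * (t 1 ^ (a + cc).val * (t 2 ^ c.val
            * (b₁ * (g 1 * (b₁ * (g 1 * g 2)))))) := by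
      simp only [mul_assoc]
    rw [h4, gpush S (a + cc) c, bgbgpush S, t21swap S (a + cc) c]
  rw [h3]
  have hk : b₁ * (g 1 * (b₁ * (g 1 * (g 1 * g 2))))
      = (b₁ * g 1 * b₁) * g 2 + (u - u⁻¹) • (e 1 * (b₁ * g 1 * b₁ * g 1 * g 2)) := by
    have h4 : b₁ * (g 1 * (b₁ * (g 1 * (g 1 * g 2))))
        = (b₁ * g 1 * b₁ * g 1 * g 1) * g 2 := by simp only [mul_assoc]
    rw [h4, key2 S, add_mul, smul_mul_assoc, mul_assoc (e 1)]
  rw [hk, mul_add, mul_add, mul_smul_comm, mul_smul_comm, map_add, map_smul, smul_eq_mul]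
  have h5 : t 1 ^ c.val * (t 2 ^ (a + cc).val * ((b₁ * g 1 * b₁) * g 2))
      = t 1 ^ c.val * t 2 ^ (a + cc).val * b₁ * g 1 * b₁ * g 2 := by
    simp only [mul_assoc]
  have h6 : t 1 ^ c.val * (t 2 ^ (a + cc).val
        * (e 1 * (b₁ * g 1 * b₁ * g 1 * g 2)))
      = t 1 ^ c.val * t 2 ^ (a + cc).val * (e 1 * (b₁ * g 1 * b₁ * g 1 * g 2)) := by
    simp only [mul_assoc]
  rw [h5, h6, trDG S c (a + cc), trEG S c (a + cc),
    show c + (a + cc) = a + c + cc by ring]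

end Stmt15
end Stmt15Aux

section Stmt15Aux
variable {K : Type*} [Field K] [CharZero K] {H : Type*} [Ring H] [Algebra K H]
    {u v z : K} {d : ℕ} [NeZero d]
    {x y : ZMod d → K}
    {b₁ : H} {t g b : ℕ → H} {e : ℕ → H} {f₁ : H} {Tr : H →ₗ[K] K}
namespace Stmt15

theorem sum_shift (f : ZMod d → K) (a : ZMod d) :
    ∑ k : ZMod d, f (a + k) = ∑ k : ZMod d, f k :=
  Fintype.sum_equiv (Equiv.addLeft a) _ _ fun _ => rfl

theorem sum_const_zmod (c : K) : ∑ _k : ZMod d, c = (d : K) * c := by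
  rw [Finset.sum_const, Finset.card_univ, ZMod.card, nsmul_eq_mul]

theorem sum2_eval1 (c : K) : ∑ _s : ZMod d, ∑ _r : ZMod d, c = (d : K) ^ 2 * c := by
  rw [sum_const_zmod, sum_const_zmod]; ring

theorem sum2_mul_left (c : K) (F : ZMod d → ZMod d → K) :
    ∑ s : ZMod d, ∑ r : ZMod d, c * F s r = c * ∑ s : ZMod d, ∑ r : ZMod d, F s r := by
  rw [Finset.mul_sum]
  exact Finset.sum_congr rfl fun s _ => by rw [Finset.mul_sum]

theorem sum2_eval_s (f : ZMod d → K) :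
    ∑ s : ZMod d, ∑ _r : ZMod d, f s = (d : K) * ∑ s : ZMod d, f s :=
  (Finset.sum_congr rfl fun s _ => sum_const_zmod (f s)).trans
    (by rw [← Finset.mul_sum])

variable (S : Hyps u v z d x y b₁ t g b e f₁ Tr)
include S

theorem master (e₁m : ZMod d → H)
    (he₁m : ∀ m : ZMod d,
      e₁m m = (d : K)⁻¹ • ∑ s : ZMod d, t 1 ^ (m + s).val * t 2 ^ (-s).val)
    (m : ZMod d) (X : H) :
    Tr (e₁m m * (e 2 * X)) = ((d : K) ^ 2)⁻¹
      * ∑ s : ZMod d, ∑ r : ZMod d,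
          Tr (t 1 ^ (m + s).val * t 2 ^ (r - s).val * t 3 ^ (-r).val * X) := by
  have hEE : e₁m m * e 2 = ((d : K) ^ 2)⁻¹
      • ∑ s : ZMod d, ∑ r : ZMod d,
          t 1 ^ (m + s).val * t 2 ^ (r - s).val * t 3 ^ (-r).val := by
    rw [he₁m m, he2' S.he, smul_mul_assoc, mul_smul_comm, smul_smul, Finset.sum_mul_sum]
    congr 1
    · rw [sq, mul_inv]
    · refine Finset.sum_congr rfl fun s _ => (Finset.sum_congr rfl fun r _ => ?_)
      rw [mul_assoc (t 1 ^ (m + s).val), ← mul_assoc (t 2 ^ (-s).val),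
        pow_val_mul S.rel_td 2 (-s) r, show -s + r = r - s by ring, ← mul_assoc]
  rw [← mul_assoc, hEE, smul_mul_assoc, map_smul, smul_eq_mul, Finset.sum_mul, map_sum]
  congr 1
  refine Finset.sum_congr rfl fun s _ => ?_
  rw [Finset.sum_mul, map_sum]

end Stmt15
end Stmt15Aux


/-- For `m ∈ ℤ/dℤ` and `n ≥ 3`, with
`A₁ := Tr(e₁^{(m)}e₂b₁g₁b₁)`, …, `A₆ := Tr(e₁^{(m)}e₂b₁g₁b₁g₁g₂g₁)`, the stated formulas for
`A₁, …, A₆` hold, and consequently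
`Tr(e₁^{(m)}e₂b₁g₁b₁g_{1,2}) = A₁ + u(A₂+A₃) + u²(A₄+A₅) + u³A₆`. -/
theorem stmt15
    {K : Type*} [Field K] [CharZero K] {H : Type*} [Ring H] [Algebra K H]
    (u v z : K) (d : ℕ) [NeZero d]
    (x y : ZMod d → K) (hx0 : x 0 = 1)
    (b₁ : H) (t g b : ℕ → H) (e : ℕ → H) (f₁ : H)
    (he : ∀ i : ℕ, 1 ≤ i → e i = (d : K)⁻¹ • ∑ s : ZMod d, t i ^ s.val * t (i + 1) ^ (-s).val)
    (hf : f₁ = (d : K)⁻¹ • ∑ s : ZMod d, t 1 ^ s.val)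
    (rel_comm : ∀ i j : ℕ, 1 ≤ i → i + 1 < j → g i * g j = g j * g i)
    (rel_braid : ∀ i : ℕ, 1 ≤ i → g i * g (i + 1) * g i = g (i + 1) * g i * g (i + 1))
    (rel_bg : ∀ i : ℕ, 2 ≤ i → b₁ * g i = g i * b₁)
    (rel_bgbg : b₁ * g 1 * b₁ * g 1 = g 1 * b₁ * g 1 * b₁)
    (rel_tt : ∀ i j : ℕ, t i * t j = t j * t i)
    (rel_tg : ∀ i j : ℕ, 1 ≤ i → t j * g i = g i * t (Equiv.swap i (i + 1) j))
    (rel_tb : ∀ i : ℕ, t i * b₁ = b₁ * t i)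
    (rel_td : ∀ i : ℕ, t i ^ d = 1)
    (rel_gsq : ∀ i : ℕ, 1 ≤ i → g i * g i = 1 + (u - u⁻¹) • (e i * g i))
    (rel_bsq : b₁ * b₁ = 1 + (v - v⁻¹) • (f₁ * b₁))
    (hb1 : b 1 = b₁)
    (hbrec : ∀ k : ℕ, 1 ≤ k → b (k + 1) * g k = g k * b k)
    (Tr : H →ₗ[K] K)
    (tr_one : Tr 1 = 1)
    (tr_g : ∀ m : ℕ, 1 ≤ m → ∀ X ∈ frameBSub K b₁ t g m, Tr (X * g m) = z * Tr X)
    (tr_bt : ∀ m : ℕ, 1 ≤ m → ∀ k : ZMod d, ∀ X ∈ frameBSub K b₁ t g m,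
      Tr (X * (b (m + 1) * t (m + 1) ^ k.val)) = y k * Tr X)
    (tr_t : ∀ m : ℕ, 1 ≤ m → ∀ k : ZMod d, ∀ X ∈ frameBSub K b₁ t g m,
      Tr (X * t (m + 1) ^ k.val) = x k * Tr X)
    (tr_comm : ∀ X Y : H, Tr (X * Y) = Tr (Y * X))
    (e₁m : ZMod d → H)
    (he₁m : ∀ m : ZMod d,
      e₁m m = (d : K)⁻¹ • ∑ s : ZMod d, t 1 ^ (m + s).val * t 2 ^ (-s).val) :
    ∀ m : ZMod d,
      Tr (e₁m m * e 2 * b₁ * g 1 * b₁)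
          = z / (d : K) * ∑ s : ZMod d, x (m + s) * x (-s)
            + (v - v⁻¹) * (z / (d : K) ^ 2) * ∑ r : ZMod d, ∑ s : ZMod d, x (-s) * y (m + s + r)
      ∧ Tr (e₁m m * e 2 * b₁ * g 1 * b₁ * g 1)
          = ((d : K) ^ 2)⁻¹ * (∑ r : ZMod d, ∑ s : ZMod d, x (-r) * y (m + s) * y (r - s))
            + (u - u⁻¹) * Tr (e₁m m * e 2 * b₁ * g 1 * b₁)
      ∧ Tr (e₁m m * e 2 * b₁ * g 1 * b₁ * g 2)
          = z ^ 2 * x m + (v - v⁻¹) * (z ^ 2 / (d : K)) * ∑ r : ZMod d, y r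
      ∧ Tr (e₁m m * e 2 * b₁ * g 1 * b₁ * g 1 * g 2)
          = z / (d : K) * ∑ s : ZMod d, y (m + s) * y (-s)
            + (u - u⁻¹) * Tr (e₁m m * e 2 * b₁ * g 1 * b₁ * g 2)
      ∧ Tr (e₁m m * e 2 * b₁ * g 1 * b₁ * g 2 * g 1)
          = Tr (e₁m m * e 2 * b₁ * g 1 * b₁ * g 1 * g 2)
      ∧ Tr (e₁m m * e 2 * b₁ * g 1 * b₁ * g 1 * g 2 * g 1)
          = Tr (e₁m m * e 2 * b₁ * g 1 * b₁ * g 2)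
            + (u - u⁻¹) * Tr (e₁m m * e 2 * b₁ * g 1 * b₁ * g 1 * g 2)
      ∧ Tr (e₁m m * e 2 * b₁ * g 1 * b₁ * (1 + u • (g 1 + g 2)
            + u ^ 2 • (g 1 * g 2 + g 2 * g 1) + u ^ 3 • (g 1 * g 2 * g 1)))
          = Tr (e₁m m * e 2 * b₁ * g 1 * b₁)
            + u * (Tr (e₁m m * e 2 * b₁ * g 1 * b₁ * g 1)
              + Tr (e₁m m * e 2 * b₁ * g 1 * b₁ * g 2))
            + u ^ 2 * (Tr (e₁m m * e 2 * b₁ * g 1 * b₁ * g 1 * g 2)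
              + Tr (e₁m m * e 2 * b₁ * g 1 * b₁ * g 2 * g 1))
            + u ^ 3 * Tr (e₁m m * e 2 * b₁ * g 1 * b₁ * g 1 * g 2 * g 1) := by
  intro m
  have S : Stmt15.Hyps u v z d x y b₁ t g b e f₁ Tr :=
    ⟨he, hf, rel_bgbg, rel_tt, rel_tg, rel_tb, rel_td, rel_gsq, rel_bsq, hb1, hbrec,
      tr_one, tr_g, tr_bt, tr_t, tr_comm⟩
  have hd : (d : K) ≠ 0 := Nat.cast_ne_zero.mpr (NeZero.ne d)
  -- closed double-sum forms
  have hQ1 : Tr (e₁m m * e 2 * b₁ * g 1 * b₁)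
      = ((d : K) ^ 2)⁻¹ * ∑ s : ZMod d, ∑ r : ZMod d,
          x (-r) * (z * x (m + r)
            + (v - v⁻¹) * (z * ((d : K)⁻¹ * ∑ k : ZMod d, y k))) := by
    have h0 : e₁m m * e 2 * b₁ * g 1 * b₁ = e₁m m * (e 2 * (b₁ * (g 1 * b₁))) := by
      simp only [mul_assoc]
    rw [h0, Stmt15.master S e₁m he₁m m (b₁ * (g 1 * b₁))]
    congr 1
    refine Finset.sum_congr rfl fun s _ => Finset.sum_congr rfl fun r _ => ?_
    rw [Stmt15.P1 S (m + s) (r - s) (-r), show m + s + (r - s) = m + r by ring]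
  have hQ2 : Tr (e₁m m * e 2 * b₁ * g 1 * b₁ * g 1)
      = ((d : K) ^ 2)⁻¹ * ∑ s : ZMod d, ∑ r : ZMod d,
          x (-r) * (y (m + s) * y (r - s) + (u - u⁻¹) * (z * x (m + r)
            + (v - v⁻¹) * (z * ((d : K)⁻¹ * ∑ k : ZMod d, y k)))) := by
    have h0 : e₁m m * e 2 * b₁ * g 1 * b₁ * g 1
        = e₁m m * (e 2 * (b₁ * (g 1 * (b₁ * g 1)))) := by simp only [mul_assoc]
    rw [h0, Stmt15.master S e₁m he₁m m (b₁ * (g 1 * (b₁ * g 1)))]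
    congr 1
    refine Finset.sum_congr rfl fun s _ => Finset.sum_congr rfl fun r _ => ?_
    rw [Stmt15.P2 S (m + s) (r - s) (-r), show m + s + (r - s) = m + r by ring]
  have hQ3 : Tr (e₁m m * e 2 * b₁ * g 1 * b₁ * g 2)
      = ((d : K) ^ 2)⁻¹ * ∑ _s : ZMod d, ∑ _r : ZMod d,
          z * (z * x m
            + (v - v⁻¹) * (z * ((d : K)⁻¹ * ∑ k : ZMod d, y k))) := by
    have h0 : e₁m m * e 2 * b₁ * g 1 * b₁ * g 2
        = e₁m m * (e 2 * (b₁ * (g 1 * (b₁ * g 2)))) := by simp only [mul_assoc]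
    rw [h0, Stmt15.master S e₁m he₁m m (b₁ * (g 1 * (b₁ * g 2)))]
    congr 1
    refine Finset.sum_congr rfl fun s _ => Finset.sum_congr rfl fun r _ => ?_
    rw [Stmt15.P3 S (m + s) (r - s) (-r), show m + s + (r - s) + -r = m by ring]
  have hQ4 : Tr (e₁m m * e 2 * b₁ * g 1 * b₁ * g 1 * g 2)
      = ((d : K) ^ 2)⁻¹ * ∑ s : ZMod d, ∑ _r : ZMod d,
          z * (y (m + s) * y (-s) + (u - u⁻¹) * (z * x m
            + (v - v⁻¹) * (z * ((d : K)⁻¹ * ∑ k : ZMod d, y k)))) := by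
    have h0 : e₁m m * e 2 * b₁ * g 1 * b₁ * g 1 * g 2
        = e₁m m * (e 2 * (b₁ * (g 1 * (b₁ * (g 1 * g 2))))) := by simp only [mul_assoc]
    rw [h0, Stmt15.master S e₁m he₁m m (b₁ * (g 1 * (b₁ * (g 1 * g 2))))]
    congr 1
    refine Finset.sum_congr rfl fun s _ => Finset.sum_congr rfl fun r _ => ?_
    rw [Stmt15.P4 S (m + s) (r - s) (-r), show m + s + (r - s) + -r = m by ring,
      show r - s + -r = -s by ring]
  have hQ5 : Tr (e₁m m * e 2 * b₁ * g 1 * b₁ * g 2 * g 1)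
      = ((d : K) ^ 2)⁻¹ * ∑ s : ZMod d, ∑ r : ZMod d,
          z * (y (r - s) * y (m + s - r) + (u - u⁻¹) * (z * x m
            + (v - v⁻¹) * (z * ((d : K)⁻¹ * ∑ k : ZMod d, y k)))) := by
    have h0 : e₁m m * e 2 * b₁ * g 1 * b₁ * g 2 * g 1
        = e₁m m * (e 2 * (b₁ * (g 1 * (b₁ * (g 2 * g 1))))) := by simp only [mul_assoc]
    rw [h0, Stmt15.master S e₁m he₁m m (b₁ * (g 1 * (b₁ * (g 2 * g 1))))]
    congr 1
    refine Finset.sum_congr rfl fun s _ => Finset.sum_congr rfl fun r _ => ?_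
    rw [Stmt15.P5 S (m + s) (r - s) (-r), show m + s + (r - s) + -r = m by ring,
      show m + s + -r = m + s - r by ring]
  have hQ6 : Tr (e₁m m * e 2 * b₁ * g 1 * b₁ * g 1 * g 2 * g 1)
      = ((d : K) ^ 2)⁻¹ * ∑ _s : ZMod d, ∑ _r : ZMod d,
          (z * (z * x m + (v - v⁻¹) * (z * ((d : K)⁻¹ * ∑ k : ZMod d, y k)))
            + (u - u⁻¹) * (z * ((d : K)⁻¹ * ∑ k : ZMod d, y k * y (m - k))
              + (u - u⁻¹) * (z * (z * x m
                + (v - v⁻¹) * (z * ((d : K)⁻¹ * ∑ k : ZMod d, y k)))))) := by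
    have h0 : e₁m m * e 2 * b₁ * g 1 * b₁ * g 1 * g 2 * g 1
        = e₁m m * (e 2 * (b₁ * (g 1 * (b₁ * (g 1 * (g 2 * g 1)))))) := by
      simp only [mul_assoc]
    rw [h0, Stmt15.master S e₁m he₁m m (b₁ * (g 1 * (b₁ * (g 1 * (g 2 * g 1)))))]
    congr 1
    refine Finset.sum_congr rfl fun s _ => Finset.sum_congr rfl fun r _ => ?_
    rw [Stmt15.P6 S (m + s) (r - s) (-r), show m + s + (r - s) + -r = m by ring,
      show m + s + -r = m + s - r by ring]
    have hre : ∑ j : ZMod d, y (r - s + j) * y (m + s - r - j)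
        = ∑ k : ZMod d, y k * y (m - k) := by
      refine Fintype.sum_equiv (Equiv.addLeft (r - s)) _ _ fun j => ?_
      simp only [Equiv.coe_addLeft]
      rw [show m - (r - s + j) = m + s - r - j by ring]
    rw [hre]
  have idB : ∑ s : ZMod d, y (m + s) * y (-s) = ∑ k : ZMod d, y k * y (m - k) := by
    refine Fintype.sum_equiv (Equiv.addLeft m) _ _ fun s => ?_
    simp only [Equiv.coe_addLeft]
    rw [show m - (m + s) = -s by ring]
  refine ⟨?_, ?_, ?_, ?_, ?_, ?_, ?_⟩
  · -- A1
    rw [hQ1]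
    have hinner : (∑ r : ZMod d, x (-r) * (z * x (m + r)
          + (v - v⁻¹) * (z * ((d : K)⁻¹ * ∑ k : ZMod d, y k))))
        = z * (∑ r : ZMod d, x (m + r) * x (-r))
          + (∑ r : ZMod d, x (-r)) * ((v - v⁻¹) * (z * ((d : K)⁻¹ * ∑ k : ZMod d, y k))) := by
      calc (∑ r : ZMod d, x (-r) * (z * x (m + r)
              + (v - v⁻¹) * (z * ((d : K)⁻¹ * ∑ k : ZMod d, y k))))
          = ∑ r : ZMod d, (z * (x (m + r) * x (-r))
              + x (-r) * ((v - v⁻¹) * (z * ((d : K)⁻¹ * ∑ k : ZMod d, y k)))) :=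
            Finset.sum_congr rfl fun r _ => by ring
        _ = _ := by rw [Finset.sum_add_distrib, ← Finset.mul_sum, ← Finset.sum_mul]
    rw [hinner, Stmt15.sum_const_zmod]
    have hT : ∑ r : ZMod d, ∑ s : ZMod d, x (-s) * y (m + s + r)
        = (∑ s : ZMod d, x (-s)) * ∑ k : ZMod d, y k := by
      rw [Finset.sum_comm]
      calc ∑ s : ZMod d, ∑ r : ZMod d, x (-s) * y (m + s + r)
          = ∑ s : ZMod d, x (-s) * ∑ k : ZMod d, y k :=
            Finset.sum_congr rfl fun s _ => by
              rw [← Finset.mul_sum, Stmt15.sum_shift y (m + s)]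
        _ = _ := by rw [← Finset.sum_mul]
    rw [hT]
    field_simp
  · -- A2
    rw [hQ2, hQ1]
    have h1 : ∑ s : ZMod d, ∑ r : ZMod d,
          x (-r) * (y (m + s) * y (r - s) + (u - u⁻¹) * (z * x (m + r)
            + (v - v⁻¹) * (z * ((d : K)⁻¹ * ∑ k : ZMod d, y k))))
        = (∑ s : ZMod d, ∑ r : ZMod d, x (-r) * y (m + s) * y (r - s))
          + (u - u⁻¹) * ∑ s : ZMod d, ∑ r : ZMod d, x (-r) * (z * x (m + r)
            + (v - v⁻¹) * (z * ((d : K)⁻¹ * ∑ k : ZMod d, y k))) := by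
      calc ∑ s : ZMod d, ∑ r : ZMod d,
            x (-r) * (y (m + s) * y (r - s) + (u - u⁻¹) * (z * x (m + r)
              + (v - v⁻¹) * (z * ((d : K)⁻¹ * ∑ k : ZMod d, y k))))
          = ∑ s : ZMod d, ∑ r : ZMod d,
            (x (-r) * y (m + s) * y (r - s) + (u - u⁻¹) * (x (-r) * (z * x (m + r)
              + (v - v⁻¹) * (z * ((d : K)⁻¹ * ∑ k : ZMod d, y k))))) :=
            Finset.sum_congr rfl fun s _ => Finset.sum_congr rfl fun r _ => by ring
        _ = (∑ s : ZMod d, ∑ r : ZMod d, x (-r) * y (m + s) * y (r - s))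
            + ∑ s : ZMod d, ∑ r : ZMod d, (u - u⁻¹) * (x (-r) * (z * x (m + r)
              + (v - v⁻¹) * (z * ((d : K)⁻¹ * ∑ k : ZMod d, y k)))) := by
            rw [← Finset.sum_add_distrib]
            exact Finset.sum_congr rfl fun s _ => Finset.sum_add_distrib
        _ = _ := by rw [Stmt15.sum2_mul_left]
    rw [h1, Finset.sum_comm (γ := ZMod d)]
    ring
  · -- A3
    rw [hQ3, Stmt15.sum2_eval1]
    field_simp
  · -- A4
    rw [hQ4, hQ3, Stmt15.sum2_eval1,
      Stmt15.sum2_eval_s (fun s => z * (y (m + s) * y (-s) + (u - u⁻¹) * (z * x m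
        + (v - v⁻¹) * (z * ((d : K)⁻¹ * ∑ k : ZMod d, y k)))))]
    have h2 : ∑ s : ZMod d, z * (y (m + s) * y (-s) + (u - u⁻¹) * (z * x m
          + (v - v⁻¹) * (z * ((d : K)⁻¹ * ∑ k : ZMod d, y k))))
        = z * (∑ s : ZMod d, y (m + s) * y (-s))
          + (d : K) * (z * ((u - u⁻¹) * (z * x m
            + (v - v⁻¹) * (z * ((d : K)⁻¹ * ∑ k : ZMod d, y k))))) := by
      calc ∑ s : ZMod d, z * (y (m + s) * y (-s) + (u - u⁻¹) * (z * x m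
              + (v - v⁻¹) * (z * ((d : K)⁻¹ * ∑ k : ZMod d, y k))))
          = ∑ s : ZMod d, (z * (y (m + s) * y (-s)) + z * ((u - u⁻¹) * (z * x m
              + (v - v⁻¹) * (z * ((d : K)⁻¹ * ∑ k : ZMod d, y k))))) :=
            Finset.sum_congr rfl fun s _ => by ring
        _ = _ := by
            rw [Finset.sum_add_distrib, ← Finset.mul_sum, Stmt15.sum_const_zmod]
    rw [h2]
    field_simp
  · -- A5
    rw [hQ5, hQ4,
      Stmt15.sum2_eval_s (fun s => z * (y (m + s) * y (-s) + (u - u⁻¹) * (z * x m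
        + (v - v⁻¹) * (z * ((d : K)⁻¹ * ∑ k : ZMod d, y k)))))]
    have h1 : ∑ s : ZMod d, ∑ r : ZMod d,
          z * (y (r - s) * y (m + s - r) + (u - u⁻¹) * (z * x m
            + (v - v⁻¹) * (z * ((d : K)⁻¹ * ∑ k : ZMod d, y k))))
        = (d : K) * ∑ s : ZMod d, z * (y (m + s) * y (-s) + (u - u⁻¹) * (z * x m
            + (v - v⁻¹) * (z * ((d : K)⁻¹ * ∑ k : ZMod d, y k)))) := by
      have hb2 : ∀ s : ZMod d, ∑ r : ZMod d, y (r - s) * y (m + s - r)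
          = ∑ k : ZMod d, y k * y (m - k) := by
        intro s
        refine Fintype.sum_equiv (Equiv.subRight s) _ _ fun r => ?_
        simp only [Equiv.subRight_apply]
        rw [show m + s - r = m - (r - s) by ring]
      calc ∑ s : ZMod d, ∑ r : ZMod d,
            z * (y (r - s) * y (m + s - r) + (u - u⁻¹) * (z * x m
              + (v - v⁻¹) * (z * ((d : K)⁻¹ * ∑ k : ZMod d, y k))))
          = ∑ s : ZMod d, (z * (∑ k : ZMod d, y k * y (m - k))
              + (d : K) * (z * ((u - u⁻¹) * (z * x m
              + (v - v⁻¹) * (z * ((d : K)⁻¹ * ∑ k : ZMod d, y k)))))) := by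
            refine Finset.sum_congr rfl fun s _ => ?_
            calc ∑ r : ZMod d, z * (y (r - s) * y (m + s - r) + (u - u⁻¹) * (z * x m
                    + (v - v⁻¹) * (z * ((d : K)⁻¹ * ∑ k : ZMod d, y k))))
                = ∑ r : ZMod d, (z * (y (r - s) * y (m + s - r)) + z * ((u - u⁻¹) * (z * x m
                    + (v - v⁻¹) * (z * ((d : K)⁻¹ * ∑ k : ZMod d, y k))))) :=
                  Finset.sum_congr rfl fun r _ => by ring
              _ = _ := by
                  rw [Finset.sum_add_distrib, ← Finset.mul_sum, Stmt15.sum_const_zmod, hb2 s]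
        _ = _ := by
            rw [Stmt15.sum_const_zmod]
            have h3 : ∑ s : ZMod d, z * (y (m + s) * y (-s) + (u - u⁻¹) * (z * x m
                  + (v - v⁻¹) * (z * ((d : K)⁻¹ * ∑ k : ZMod d, y k))))
                = z * (∑ k : ZMod d, y k * y (m - k))
                  + (d : K) * (z * ((u - u⁻¹) * (z * x m
                  + (v - v⁻¹) * (z * ((d : K)⁻¹ * ∑ k : ZMod d, y k))))) := by
              calc ∑ s : ZMod d, z * (y (m + s) * y (-s) + (u - u⁻¹) * (z * x m
                      + (v - v⁻¹) * (z * ((d : K)⁻¹ * ∑ k : ZMod d, y k))))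
                  = ∑ s : ZMod d, (z * (y (m + s) * y (-s)) + z * ((u - u⁻¹) * (z * x m
                      + (v - v⁻¹) * (z * ((d : K)⁻¹ * ∑ k : ZMod d, y k))))) :=
                    Finset.sum_congr rfl fun s _ => by ring
                _ = _ := by
                    rw [Finset.sum_add_distrib, ← Finset.mul_sum, Stmt15.sum_const_zmod, idB]
            rw [h3]
    rw [h1]
  · -- A6
    rw [hQ6, hQ3, hQ4, Stmt15.sum2_eval1, Stmt15.sum2_eval1,
      Stmt15.sum2_eval_s (fun s => z * (y (m + s) * y (-s) + (u - u⁻¹) * (z * x m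
        + (v - v⁻¹) * (z * ((d : K)⁻¹ * ∑ k : ZMod d, y k)))))]
    have h2 : ∑ s : ZMod d, z * (y (m + s) * y (-s) + (u - u⁻¹) * (z * x m
          + (v - v⁻¹) * (z * ((d : K)⁻¹ * ∑ k : ZMod d, y k))))
        = z * (∑ k : ZMod d, y k * y (m - k))
          + (d : K) * (z * ((u - u⁻¹) * (z * x m
            + (v - v⁻¹) * (z * ((d : K)⁻¹ * ∑ k : ZMod d, y k))))) := by
      calc ∑ s : ZMod d, z * (y (m + s) * y (-s) + (u - u⁻¹) * (z * x m
              + (v - v⁻¹) * (z * ((d : K)⁻¹ * ∑ k : ZMod d, y k))))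
          = ∑ s : ZMod d, (z * (y (m + s) * y (-s)) + z * ((u - u⁻¹) * (z * x m
              + (v - v⁻¹) * (z * ((d : K)⁻¹ * ∑ k : ZMod d, y k))))) :=
            Finset.sum_congr rfl fun s _ => by ring
        _ = _ := by
            rw [Finset.sum_add_distrib, ← Finset.mul_sum, Stmt15.sum_const_zmod, idB]
    rw [h2]
    field_simp
  · -- linearity
    simp only [mul_add, mul_one, mul_smul_comm, ← mul_assoc, map_add, map_smul, smul_eq_mul]
end
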